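/- arXiv:math/0309397 — 6 statements merged into one kernel-verified Lean document; each statement's English description precedes it below -/
import Mathlib

section
/- Let S = (S_1,...,S_n) satisfy the (†) relations on H, and let H_p = Σ_{w ∈ F_n^+} ⊕ w(S)W where W = Ran(I - Σ_i S_iS_i*). Then H_p is a reducing subspace for each S_i (i.e., invariant for S_i and S_i*). -/
open ContinuousLinearMap

/-- For a word `w = [i_m, …, i_1]` in the free semigroup on `n` letters,
`wordOp S w = S_{i_m} ⋯ S_{i_1}` (the empty word giving the identity). -/
noncomputable def wordOp {H : Type*} [NormedAddCommGroup H] [InnerProductSpace ℂ H]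
    {n : ℕ} (S : Fin n → H →L[ℂ] H) (w : List (Fin n)) : H →L[ℂ] H :=
  (w.map S).prod

section Aux

variable {H : Type*} [NormedAddCommGroup H] [InnerProductSpace ℂ H] [CompleteSpace H]

local notation "⟪" x ", " y "⟫" => @inner ℂ _ _ x y

lemma ring_id1 {R : Type*} [Ring R] (P Q : R) (hP2 : P * P = P) (hQ2 : Q * Q = Q) :
    (Q * (1 - P)) * ((1 - P) * Q) = -(Q * ((P - Q) * Q)) := by
  have h1 : (Q * (1 - P)) * ((1 - P) * Q) = Q * Q - Q * P * Q - Q * P * Q + Q * P * P * Q := by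
    noncomm_ring
  have h2 : -(Q * ((P - Q) * Q)) = Q * Q * Q - Q * P * Q := by noncomm_ring
  rw [h1, h2, mul_assoc Q P P, hP2]
  simp only [hQ2]
  abel

lemma ring_id2 {R : Type*} [Ring R] (A B : R) (h : (B * A) * (B * A) = B * A) :
    (B * A * B - B) * (A * (B * A) - A) = 0 := by
  have h4 : B * A * B * A = B * A := by rw [mul_assoc (B * A) B A, h]
  have e : (B * A * B - B) * (A * (B * A) - A)
      = B * A * B * A * B * A - B * A * B * A - B * A * B * A + B * A := by noncomm_ring
  rw [e, h4]
  have h6 : B * A * B * A = B * A := h4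
  rw [h6]
  abel

lemma aux_adj_mul_self_eq_zero {A : H →L[ℂ] H} (h : adjoint A * A = 0) : A = 0 := by
  ext x
  have h2 : ‖A x‖ ^ 2 = 0 := by
    rw [apply_norm_sq_eq_inner_adjoint_left]
    have : (adjoint A ∘L A) = 0 := h
    rw [this]
    simp
  have : ‖A x‖ = 0 := pow_eq_zero_iff (n := 2) (by norm_num) |>.mp h2
  simpa using this

lemma aux_pi (A : H →L[ℂ] H) (h : (adjoint A * A) * (adjoint A * A) = adjoint A * A) :
    A * (adjoint A * A) = A := by
  have h' : (star A * A) * (star A * A) = star A * A := by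
    simpa [star_eq_adjoint] using h
  have key : adjoint (A * (adjoint A * A) - A) * (A * (adjoint A * A) - A) = 0 := by
    simp only [← star_eq_adjoint, star_sub, star_mul, star_star]
    exact ring_id2 A (star A) h'
  exact sub_eq_zero.mp (aux_adj_mul_self_eq_zero key)

lemma aux_dom {P Q : H →L[ℂ] H} (hP : IsSelfAdjoint P) (hQ : IsSelfAdjoint Q)
    (hP2 : P * P = P) (hQ2 : Q * Q = Q) (h : Q ≤ P) : P * Q = Q := by
  have hpos : (P - Q).IsPositive := (le_def _ _).mp h
  have hconj0 : ((adjoint Q) ∘L ((P - Q) ∘L Q)).IsPositive := hpos.adjoint_conj Q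
  have hQadj : adjoint Q = Q := by rw [← star_eq_adjoint]; exact hQ
  rw [hQadj] at hconj0
  have hconj : (Q * ((P - Q) * Q)).IsPositive := hconj0
  have key : adjoint ((1 - P) * Q) * ((1 - P) * Q) = -(Q * ((P - Q) * Q)) := by
    have hadj : adjoint ((1 - P) * Q) = Q * (1 - P) := by
      rw [← star_eq_adjoint, star_mul, star_sub, star_one, hQ.star_eq, hP.star_eq]
    rw [hadj]
    exact ring_id1 P Q hP2 hQ2
  have hB : (1 - P) * Q = 0 := by
    ext x
    have hx := apply_norm_sq_eq_inner_adjoint_right ((1 - P) * Q) x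
    rw [show (adjoint ((1 - P) * Q) ∘L ((1 - P) * Q)) = -(Q * ((P - Q) * Q)) from key] at hx
    have hpos' : 0 ≤ RCLike.re ⟪x, (Q * ((P - Q) * Q)) x⟫ := hconj.re_inner_nonneg_right x
    have hle : ‖((1 - P) * Q) x‖ ^ 2 ≤ 0 := by
      rw [hx, neg_apply, inner_neg_right, map_neg]
      linarith
    have hnorm : ‖((1 - P) * Q) x‖ = 0 := by
      nlinarith [norm_nonneg (((1 - P) * Q) x)]
    simpa using hnorm
  have h1 : Q - P * Q = 0 := by
    have e : (1 - P) * Q = Q - P * Q := by rw [sub_mul, one_mul]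
    rw [← e, hB]
  exact (sub_eq_zero.mp h1).symm

lemma aux_orth {P Q : H →L[ℂ] H} (hP : IsSelfAdjoint P) (hQ : IsSelfAdjoint Q)
    (hP2 : P * P = P) (hQ2 : Q * Q = Q) (h : P + Q ≤ 1) : P * Q = 0 := by
  have hle : Q ≤ 1 - P := by
    rw [le_def]
    have : (1 - P) - Q = 1 - (P + Q) := by abel
    rw [this]
    exact (le_def _ _).mp h
  have h1P : IsSelfAdjoint (1 - P) := (IsSelfAdjoint.one (R := H →L[ℂ] H)).sub hP
  have h1P2 : (1 - P) * (1 - P) = 1 - P := by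
    rw [mul_one_sub, one_sub_mul, hP2, sub_self, sub_zero]
  have hd := aux_dom h1P hQ h1P2 hQ2 hle
  have e : (1 - P) * Q = Q - P * Q := by rw [sub_mul, one_mul]
  rw [e] at hd
  have e2 : P * Q = Q - (Q - P * Q) := by abel
  rw [e2, hd, sub_self]

end Aux

set_option maxHeartbeats 1000000 in
/-- Let `S = (S₁,…,Sₙ)` satisfy the (†) relations on `H`, and let
`H_p = ∑_{w ∈ F⁺ₙ} ⊕ w(S)W` where `W = Ran(I - ∑ᵢ SᵢSᵢ*)`.  Then `H_p` is a
reducing subspace for each `Sᵢ` (invariant for `Sᵢ` and `Sᵢ*`). -/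
theorem stmt6 {H : Type*} [NormedAddCommGroup H] [InnerProductSpace ℂ H] [CompleteSpace H]
    {n : ℕ} (S : Fin n → H →L[ℂ] H)
    (h1 : ∑ i, S i * adjoint (S i) ≤ 1)
    (h2 : ∀ i, (adjoint (S i) * S i) * (adjoint (S i) * S i) = adjoint (S i) * S i)
    (h3 : ∀ i j, (adjoint (S i) * S i) * (adjoint (S j) * S j) = 0 ∨
      adjoint (S i) * S i = adjoint (S j) * S j)
    (h4 : ∀ i, ∃ j, S i * adjoint (S i) ≤ adjoint (S j) * S j)
    {κ : Type*} [Fintype κ] (P : κ → H →L[ℂ] H)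
    (h5inj : Function.Injective P)
    (h5mem : ∀ i, ∃ k, adjoint (S i) * S i = P k)
    (h5surj : ∀ k, ∃ i, P k = adjoint (S i) * S i)
    (h5 : ∑ k, P k = 1)
    (Hp : Submodule ℂ H)
    (hHp : Hp = (⨆ w : List (Fin n),
      LinearMap.range ((wordOp S w * (1 - ∑ i, S i * adjoint (S i))) :
        H →L[ℂ] H).toLinearMap).topologicalClosure) :
    ∀ i, ∀ x ∈ Hp, S i x ∈ Hp ∧ adjoint (S i) x ∈ Hp := by
  classical
  set D : H →L[ℂ] H := 1 - ∑ i, S i * adjoint (S i) with hDdef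
  have Esa : ∀ i, IsSelfAdjoint (adjoint (S i) * S i) := by
    intro i
    rw [IsSelfAdjoint, star_mul, star_eq_adjoint, star_eq_adjoint, adjoint_adjoint]
  have Qsa : ∀ i, IsSelfAdjoint (S i * adjoint (S i)) := by
    intro i
    rw [IsSelfAdjoint, star_mul, star_eq_adjoint, star_eq_adjoint, adjoint_adjoint]
  have pi : ∀ i, S i * (adjoint (S i) * S i) = S i := fun i => aux_pi (S i) (h2 i)
  have pistar : ∀ i, (adjoint (S i) * S i) * adjoint (S i) = adjoint (S i) := by
    intro i
    have h' := congrArg star (pi i)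
    rw [star_mul, (Esa i).star_eq, star_eq_adjoint] at h'
    exact h'
  have Qidem : ∀ i, (S i * adjoint (S i)) * (S i * adjoint (S i)) = S i * adjoint (S i) := by
    intro i
    have e : (S i * adjoint (S i)) * (S i * adjoint (S i))
        = S i * ((adjoint (S i) * S i) * adjoint (S i)) := by simp only [mul_assoc]
    rw [e, pistar i]
  have Qpos : ∀ i, (S i * adjoint (S i)).IsPositive := by
    intro i
    refine ⟨(Qsa i).isSymmetric, fun x => ?_⟩
    have e := apply_norm_sq_eq_inner_adjoint_left (adjoint (S i)) x
    rw [adjoint_adjoint] at e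
    rw [ContinuousLinearMap.reApplyInnerSelf_apply]
    rw [show (S i * adjoint (S i)) x = (S i ∘L adjoint (S i)) x from rfl, ← e]
    positivity
  have hsum_pos : ∀ (s : Finset (Fin n)), (∑ k ∈ s, S k * adjoint (S k)).IsPositive := by
    intro s
    exact Finset.sum_induction _ _ (fun a b ha hb => ha.add hb) isPositive_zero
      (fun k _ => Qpos k)
  have QQle : ∀ i j, i ≠ j → (S i * adjoint (S i)) + (S j * adjoint (S j)) ≤ 1 := by
    intro i j hij
    rw [le_def]
    have hj : j ∈ Finset.univ.erase i := Finset.mem_erase.mpr ⟨hij.symm, Finset.mem_univ j⟩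
    have hsplit : ∑ k, S k * adjoint (S k)
        = (S i * adjoint (S i)) + ((S j * adjoint (S j))
            + ∑ k ∈ ((Finset.univ.erase i).erase j), S k * adjoint (S k)) := by
      rw [← Finset.add_sum_erase _ _ (Finset.mem_univ i), ← Finset.add_sum_erase _ _ hj]
    have e : (1 : H →L[ℂ] H) - ((S i * adjoint (S i)) + (S j * adjoint (S j)))
        = (1 - ∑ k, S k * adjoint (S k))
            + ∑ k ∈ ((Finset.univ.erase i).erase j), S k * adjoint (S k) := by
      rw [hsplit]; abel
    rw [e]
    exact ((le_def _ _).mp h1).add (hsum_pos _)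
  have orth : ∀ i j, i ≠ j → (S i * adjoint (S i)) * (S j * adjoint (S j)) = 0 :=
    fun i j hij => aux_orth (Qsa i) (Qsa j) (Qidem i) (Qidem j) (QQle i j hij)
  have SQ : ∀ i, (S i * adjoint (S i)) * S i = S i := by
    intro i; rw [mul_assoc, pi i]
  have QS' : ∀ i, adjoint (S i) * (S i * adjoint (S i)) = adjoint (S i) := by
    intro i; rw [← mul_assoc, pistar i]
  have cross : ∀ i j, i ≠ j → adjoint (S i) * S j = 0 := by
    intro i j hij
    have e1 : adjoint (S i) * S j
        = (adjoint (S i) * (S i * adjoint (S i))) * ((S j * adjoint (S j)) * S j) := by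
      rw [QS' i, SQ j]
    have e2 : (adjoint (S i) * (S i * adjoint (S i))) * ((S j * adjoint (S j)) * S j)
        = adjoint (S i) * (((S i * adjoint (S i)) * (S j * adjoint (S j))) * S j) := by
      simp only [mul_assoc]
    rw [e1, e2, orth i j hij, zero_mul, mul_zero]
  have adjD : ∀ i, adjoint (S i) * D = 0 := by
    intro i
    rw [hDdef, mul_sub, mul_one, Finset.mul_sum]
    have e : ∑ j, adjoint (S i) * (S j * adjoint (S j)) = adjoint (S i) := by
      rw [Finset.sum_eq_single i]
      · exact QS' i
      · intro j _ hji
        rw [← mul_assoc, cross i j (Ne.symm hji), zero_mul]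
      · intro h; exact absurd (Finset.mem_univ i) h
    rw [e, sub_self]
  have ES : ∀ i j, (adjoint (S i) * S i) * S j = S j ∨ (adjoint (S i) * S i) * S j = 0 := by
    intro i j
    obtain ⟨m, hm⟩ := h4 j
    have hdom : (adjoint (S m) * S m) * (S j * adjoint (S j)) = S j * adjoint (S j) :=
      aux_dom (Esa m) (Qsa j) (h2 m) (Qidem j) hm
    have hSj : S j = (adjoint (S m) * S m) * S j := by
      calc S j = (S j * adjoint (S j)) * S j := (SQ j).symm
        _ = ((adjoint (S m) * S m) * (S j * adjoint (S j))) * S j := by rw [hdom]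
        _ = (adjoint (S m) * S m) * ((S j * adjoint (S j)) * S j) := by simp only [mul_assoc]
        _ = (adjoint (S m) * S m) * S j := by rw [SQ j]
    rcases h3 i m with h0 | heq
    · right
      calc (adjoint (S i) * S i) * S j
          = (adjoint (S i) * S i) * ((adjoint (S m) * S m) * S j) := by rw [← hSj]
        _ = ((adjoint (S i) * S i) * (adjoint (S m) * S m)) * S j := by simp only [mul_assoc]
        _ = 0 := by rw [h0, zero_mul]
    · left
      rw [heq, ← hSj]
  have EQ : ∀ i j, (adjoint (S i) * S i) * (S j * adjoint (S j)) = S j * adjoint (S j)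
      ∨ (adjoint (S i) * S i) * (S j * adjoint (S j)) = 0 := by
    intro i j
    rcases ES i j with h | h
    · left; rw [← mul_assoc, h]
    · right; rw [← mul_assoc, h, zero_mul]
  have EQcomm : ∀ i j, (adjoint (S i) * S i) * (S j * adjoint (S j))
      = (S j * adjoint (S j)) * (adjoint (S i) * S i) := by
    intro i j
    have hsa : IsSelfAdjoint ((adjoint (S i) * S i) * (S j * adjoint (S j))) := by
      rcases EQ i j with h | h
      · rw [h]; exact Qsa j
      · rw [h]; exact (show star (0 : H →L[ℂ] H) = 0 from star_zero _)
    have h' := hsa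
    rw [IsSelfAdjoint, star_mul, (Qsa j).star_eq, (Esa i).star_eq] at h'
    exact h'.symm
  have ED : ∀ i, (adjoint (S i) * S i) * D = D * (adjoint (S i) * S i) := by
    intro i
    have e : (adjoint (S i) * S i) * (∑ j, S j * adjoint (S j))
        = (∑ j, S j * adjoint (S j)) * (adjoint (S i) * S i) := by
      rw [Finset.mul_sum, Finset.sum_mul]
      exact Finset.sum_congr rfl fun j _ => EQcomm i j
    rw [hDdef, mul_sub, sub_mul, mul_one, one_mul, e]
  set M : Submodule ℂ H := ⨆ w : List (Fin n),
      LinearMap.range ((wordOp S w * D) : H →L[ℂ] H).toLinearMap with hMdef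
  have memM : ∀ (w : List (Fin n)) (y : H), (wordOp S w * D) y ∈ M := by
    intro w y
    exact Submodule.mem_iSup_of_mem w (LinearMap.mem_range.mpr ⟨y, rfl⟩)
  have wcons : ∀ (j : Fin n) (w : List (Fin n)), wordOp S (j :: w) = S j * wordOp S w := by
    intro j w; simp [wordOp]
  have wnil : wordOp S ([] : List (Fin n)) = 1 := rfl
  have Eword : ∀ (i : Fin n) (w : List (Fin n)), ∃ T : H →L[ℂ] H,
      (adjoint (S i) * S i) * (wordOp S w * D) = (wordOp S w * D) * T := by
    intro i w
    cases w with
    | nil =>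
      refine ⟨adjoint (S i) * S i, ?_⟩
      rw [wnil, one_mul, ED i]
    | cons k w' =>
      rcases ES i k with h | h
      · refine ⟨1, ?_⟩
        rw [mul_one, wcons k w']
        calc (adjoint (S i) * S i) * ((S k * wordOp S w') * D)
            = (((adjoint (S i) * S i) * S k) * wordOp S w') * D := by simp only [mul_assoc]
          _ = (S k * wordOp S w') * D := by rw [h]
      · refine ⟨0, ?_⟩
        rw [mul_zero, wcons k w']
        calc (adjoint (S i) * S i) * ((S k * wordOp S w') * D)
            = (((adjoint (S i) * S i) * S k) * wordOp S w') * D := by simp only [mul_assoc]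
          _ = 0 := by rw [h, zero_mul, zero_mul]
  have keyT : ∀ (i : Fin n) (w : List (Fin n)),
      ∃ w' T, S i * (wordOp S w * D) = (wordOp S w' * D) * T := by
    intro i w
    exact ⟨i :: w, 1, by rw [mul_one, wcons, ← mul_assoc]⟩
  have keyTadj : ∀ (i : Fin n) (w : List (Fin n)),
      ∃ w' T, adjoint (S i) * (wordOp S w * D) = (wordOp S w' * D) * T := by
    intro i w
    cases w with
    | nil =>
      refine ⟨[], 0, ?_⟩
      rw [wnil, one_mul, mul_zero, adjD i]
    | cons k w' =>
      by_cases hik : i = k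
      · subst hik
        obtain ⟨T, hT⟩ := Eword i w'
        refine ⟨w', T, ?_⟩
        rw [wcons]
        calc adjoint (S i) * ((S i * wordOp S w') * D)
            = (adjoint (S i) * S i) * (wordOp S w' * D) := by simp only [mul_assoc]
          _ = (wordOp S w' * D) * T := hT
      · refine ⟨[], 0, ?_⟩
        have hc : adjoint (S i) * S k = 0 := cross i k hik
        rw [wcons]
        calc adjoint (S i) * ((S k * wordOp S w') * D)
            = ((adjoint (S i) * S k) * wordOp S w') * D := by simp only [mul_assoc]
          _ = 0 := by rw [hc, zero_mul, zero_mul]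
          _ = (wordOp S ([] : List (Fin n)) * D) * 0 := by rw [mul_zero]
  have main : ∀ T : H →L[ℂ] H,
      (∀ w : List (Fin n), ∃ w' T', T * (wordOp S w * D) = (wordOp S w' * D) * T') →
      ∀ x ∈ Hp, T x ∈ Hp := by
    intro T hT x hx
    rw [hHp] at hx ⊢
    have hclosed : IsClosed
        ((M.topologicalClosure.comap (T : H →ₗ[ℂ] H) : Submodule ℂ H) : Set H) := by
      have e : ((M.topologicalClosure.comap (T : H →ₗ[ℂ] H) : Submodule ℂ H) : Set H)
          = T ⁻¹' (M.topologicalClosure : Set H) := rfl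
      rw [e]
      exact M.isClosed_topologicalClosure.preimage T.continuous
    have hle : M ≤ M.topologicalClosure.comap (T : H →ₗ[ℂ] H) := by
      intro y hy
      rw [Submodule.mem_comap]
      refine Submodule.iSup_induction (motive := fun z => T z ∈ M.topologicalClosure) _ hy ?_ ?_ ?_
      · intro w z hz
        obtain ⟨u, hu⟩ := LinearMap.mem_range.mp hz
        obtain ⟨w', T', hww⟩ := hT w
        have happ : T z = (wordOp S w' * D) (T' u) := by
          rw [← hu]
          have := congrArg (fun (F : H →L[ℂ] H) => F u) hww
          simpa using this
        rw [happ]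
        exact Submodule.le_topologicalClosure _ (memM w' (T' u))
      · simp
      · intro a b ha hb; rw [map_add]; exact add_mem ha hb
    exact (Submodule.topologicalClosure_minimal _ hle hclosed) hx
  intro i x hx
  exact ⟨main (S i) (keyT i) x hx, main (adjoint (S i)) (keyTadj i) x hx⟩
end

section
/- Let S = (S_1,...,S_n) satisfy (†) on H, let H_p be the S-reducing subspace generated by the wandering subspace W = Ran(I - Σ S_iS_i*), and let H_c be its orthogonal complement. Then the restrictions V_i = S_i|_{H_c} satisfy Σ_{i=1}^n V_iV_i* = I_{H_c}, i.e., the tuple (V_1,...,V_n) is fully coisometric. -/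
open ContinuousLinearMap

/-- Let `S = (S₁,…,Sₙ)` satisfy (†) on `H`, let `H_p` be the `S`-reducing subspace
generated by the wandering subspace `W = Ran(I - ∑ SᵢSᵢ*)`, and let `H_c` be its
orthogonal complement.  Then the restrictions `Vᵢ = Sᵢ|_{H_c}` satisfy
`∑ᵢ VᵢVᵢ* = I_{H_c}`, i.e. the tuple `(V₁,…,Vₙ)` is fully coisometric. -/
theorem stmt7 {H : Type*} [NormedAddCommGroup H] [InnerProductSpace ℂ H] [CompleteSpace H]
    {n : ℕ} (S : Fin n → H →L[ℂ] H)
    (h1 : ∑ i, S i * adjoint (S i) ≤ 1)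
    (h2 : ∀ i, (adjoint (S i) * S i) * (adjoint (S i) * S i) = adjoint (S i) * S i)
    (h3 : ∀ i j, (adjoint (S i) * S i) * (adjoint (S j) * S j) = 0 ∨
      adjoint (S i) * S i = adjoint (S j) * S j)
    (h4 : ∀ i, ∃ j, S i * adjoint (S i) ≤ adjoint (S j) * S j)
    {κ : Type*} [Fintype κ] (P : κ → H →L[ℂ] H)
    (h5inj : Function.Injective P)
    (h5mem : ∀ i, ∃ k, adjoint (S i) * S i = P k)
    (h5surj : ∀ k, ∃ i, P k = adjoint (S i) * S i)
    (h5 : ∑ k, P k = 1)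
    (Hp : Submodule ℂ H)
    (hHp : Hp = (⨆ w : List (Fin n),
      LinearMap.range ((wordOp S w * (1 - ∑ i, S i * adjoint (S i))) :
        H →L[ℂ] H).toLinearMap).topologicalClosure) :
    ∀ x ∈ Hpᗮ, ∑ i, S i (adjoint (S i) x) = x := by
  intro x hx
  set T : H →L[ℂ] H := 1 - ∑ i, S i * adjoint (S i) with hT
  have hmem : ∀ z : H, T z ∈ Hp := by
    intro z
    rw [hHp]
    apply Submodule.le_topologicalClosure
    refine Submodule.mem_iSup_of_mem ([] : List (Fin n)) ?_
    exact ⟨z, by simp [wordOp, hT]⟩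
  have hkey : ∀ z : H, (inner ℂ (T z) x : ℂ) = 0 := fun z =>
    (Submodule.mem_orthogonal _ _).1 hx _ (hmem z)
  have hadj : adjoint T = T := by
    simp only [hT, ← star_eq_adjoint, star_sub, star_one, star_sum, star_mul, star_star]
  have h0 : T x = 0 := by
    rw [← inner_self_eq_zero (𝕜 := ℂ)]
    calc (inner ℂ (T x) (T x) : ℂ) = inner ℂ (adjoint T (T x)) x :=
        (adjoint_inner_left T x (T x)).symm
      _ = inner ℂ (T (T x)) x := by rw [hadj]
      _ = 0 := hkey (T x)
  have : T x = x - ∑ i, S i (adjoint (S i) x) := by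
    simp [hT, sub_apply, sum_apply, mul_apply]
  rw [this] at h0
  exact (sub_eq_zero.mp h0).symm
end

section
/- Let S = (S_1,...,S_n) satisfy (†) on H and let Φ(A) = Σ_i S_i A S_i*. If K ⊆ H is a reducing subspace for all S_i such that the restrictions S_i|_K form a fully coisometric tuple (Σ_i S_iS_i*|_K = I_K), then K ⊆ H_c, where H_c is the orthogonal complement of the pure part H_p = Σ_{w∈F_n^+} ⊕ w(S)W, W = Ran(I - Σ_i S_iS_i*). -/
open ContinuousLinearMap
open scoped InnerProductSpace

/-- Let `S = (S₁,…,Sₙ)` satisfy (†) on `H`.  If `K ⊆ H` is a reducing subspace for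
all the `Sᵢ` such that the restrictions `Sᵢ|_K` form a fully coisometric tuple
(`∑ᵢ SᵢSᵢ*|_K = I_K`), then `K ⊆ H_c`, where `H_c` is the orthogonal complement of
the pure part `H_p = ∑_{w∈F⁺ₙ} ⊕ w(S)W`, `W = Ran(I - ∑ᵢ SᵢSᵢ*)`. -/
theorem stmt8 {H : Type*} [NormedAddCommGroup H] [InnerProductSpace ℂ H] [CompleteSpace H]
    {n : ℕ} (S : Fin n → H →L[ℂ] H)
    (h1 : ∑ i, S i * adjoint (S i) ≤ 1)
    (h2 : ∀ i, (adjoint (S i) * S i) * (adjoint (S i) * S i) = adjoint (S i) * S i)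
    (h3 : ∀ i j, (adjoint (S i) * S i) * (adjoint (S j) * S j) = 0 ∨
      adjoint (S i) * S i = adjoint (S j) * S j)
    (h4 : ∀ i, ∃ j, S i * adjoint (S i) ≤ adjoint (S j) * S j)
    {κ : Type*} [Fintype κ] (P : κ → H →L[ℂ] H)
    (h5inj : Function.Injective P)
    (h5mem : ∀ i, ∃ k, adjoint (S i) * S i = P k)
    (h5surj : ∀ k, ∃ i, P k = adjoint (S i) * S i)
    (h5 : ∑ k, P k = 1)
    (Hp : Submodule ℂ H)
    (hHp : Hp = (⨆ w : List (Fin n),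
      LinearMap.range ((wordOp S w * (1 - ∑ i, S i * adjoint (S i))) :
        H →L[ℂ] H).toLinearMap).topologicalClosure)
    (K : Submodule ℂ H) (hKclosed : IsClosed (K : Set H))
    (hKred : ∀ i, ∀ x ∈ K, S i x ∈ K ∧ adjoint (S i) x ∈ K)
    (hKco : ∀ x ∈ K, ∑ i, S i (adjoint (S i) x) = x) :
    K ≤ Hpᗮ := by
  -- adjoint of a word operator preserves K
  have hword : ∀ (w : List (Fin n)) (x : H), x ∈ K → adjoint (wordOp S w) x ∈ K := by
    intro w
    induction w with
    | nil =>
        intro x hx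
        rw [show wordOp S ([] : List (Fin n)) = 1 from by simp [wordOp], ← star_eq_adjoint, star_one]
        exact hx
    | cons i w ih =>
        intro x hx
        have : wordOp S (i :: w) = S i ∘L wordOp S w := by
          simp [wordOp, List.prod_cons]; rfl
        rw [this, adjoint_comp]
        exact ih _ (hKred i x hx).2
  -- (1 - Σ Sᵢ Sᵢ*) kills K
  have hkill : ∀ x ∈ K, ((1 : H →L[ℂ] H) - ∑ i, S i * adjoint (S i)) x = 0 := by
    intro x hx
    have := hKco x hx
    simp only [ContinuousLinearMap.sub_apply, ContinuousLinearMap.one_apply,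
      ContinuousLinearMap.sum_apply, ContinuousLinearMap.mul_apply] at *
    rw [this]; exact sub_self x
  -- Hp ≤ Kᗮ
  have hle : Hp ≤ Kᗮ := by
    rw [hHp]
    refine Submodule.topologicalClosure_minimal _ (iSup_le fun w => ?_)
      (Submodule.isClosed_orthogonal K)
    rintro _ ⟨z, rfl⟩
    rw [Submodule.mem_orthogonal]
    intro u hu
    have hadj : adjoint ((wordOp S w * (1 - ∑ i, S i * adjoint (S i))) : H →L[ℂ] H) u
        = ((1 : H →L[ℂ] H) - ∑ i, S i * adjoint (S i)) (adjoint (wordOp S w) u) := by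
      have : adjoint ((1 : H →L[ℂ] H) - ∑ i, S i * adjoint (S i))
          = (1 : H →L[ℂ] H) - ∑ i, S i * adjoint (S i) := by
        rw [map_sub, map_sum, ← star_eq_adjoint, star_one]
        congr 1
        refine Finset.sum_congr rfl fun i _ => ?_
        show adjoint (S i ∘L adjoint (S i)) = _
        rw [adjoint_comp, adjoint_adjoint]; rfl
      show adjoint ((wordOp S w) ∘L _) u = _
      rw [adjoint_comp, this]; rfl
    have : ⟪u, ((wordOp S w * (1 - ∑ i, S i * adjoint (S i))) : H →L[ℂ] H) z⟫_ℂ = 0 := by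
      rw [← ContinuousLinearMap.adjoint_inner_left, hadj,
        hkill _ (hword w u hu), inner_zero_left]
    simpa [inner_sub_right, inner_sum] using this
  intro x hx
  rw [Submodule.mem_orthogonal]
  intro y hy
  have := (Submodule.mem_orthogonal K y).mp (hle hy) x hx
  rw [← inner_conj_symm, this, map_zero]
end

section
/- Let S = (S_1,...,S_n) satisfy (†) on H and set X_k = Σ_{w ∈ F_n^+, |w|=k} w(S)w(S)* for k ≥ 1. Then on the pure subspace H_p = Σ_{w∈F_n^+} ⊕ w(S)W (with W = Ran(I - ΣS_iS_i*)), the sequence X_k converges to 0 in the strong operator topology. -/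
open ContinuousLinearMap

namespace Stmt9Aux

variable {H : Type*} [NormedAddCommGroup H] [InnerProductSpace ℂ H] [CompleteSpace H]
variable {n : ℕ} {S : Fin n → H →L[ℂ] H}

lemma wordOp_nil : wordOp S [] = 1 := by simp [wordOp]

lemma wordOp_cons (a : Fin n) (w : List (Fin n)) :
    wordOp S (a :: w) = S a * wordOp S w := by simp [wordOp]

lemma star_Q (i : Fin n) : star (adjoint (S i) * S i) = adjoint (S i) * S i := by
  rw [star_mul, star_eq_adjoint, star_eq_adjoint, adjoint_adjoint]

lemma star_E (i : Fin n) : star (S i * adjoint (S i)) = S i * adjoint (S i) := by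
  rw [star_mul, star_eq_adjoint, star_eq_adjoint, adjoint_adjoint]

lemma E_nonneg (i : Fin n) : (0 : H →L[ℂ] H) ≤ S i * adjoint (S i) := by
  simpa [star_eq_adjoint, adjoint_adjoint] using star_mul_self_nonneg (adjoint (S i))

variable (h2 : ∀ i, (adjoint (S i) * S i) * (adjoint (S i) * S i) = adjoint (S i) * S i)

include h2 in
lemma SQ (i : Fin n) : S i * (adjoint (S i) * S i) = S i := by
  have hz : (1 - adjoint (S i) * S i) * (adjoint (S i) * S i) = 0 := by
    rw [sub_mul, one_mul, h2 i, sub_self]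
  have key : star (S i * (1 - adjoint (S i) * S i)) * (S i * (1 - adjoint (S i) * S i)) = 0 := by
    rw [star_mul, star_sub, star_one, star_Q, star_eq_adjoint, mul_assoc,
      ← mul_assoc (adjoint (S i)) (S i), ← mul_assoc, hz, zero_mul]
  have := (CStarRing.star_mul_self_eq_zero_iff _).mp key
  rw [mul_sub, mul_one, sub_eq_zero] at this
  exact this.symm

include h2 in
lemma QSa (i : Fin n) : (adjoint (S i) * S i) * adjoint (S i) = adjoint (S i) := by
  have := congrArg star (SQ h2 i)
  rwa [star_mul, star_Q, star_eq_adjoint] at this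

include h2 in
lemma E_proj (i : Fin n) : (S i * adjoint (S i)) * (S i * adjoint (S i)) = S i * adjoint (S i) := by
  calc (S i * adjoint (S i)) * (S i * adjoint (S i))
      = S i * ((adjoint (S i) * S i) * adjoint (S i)) := by
        simp only [mul_assoc]
    _ = S i * adjoint (S i) := by rw [QSa h2 i]

/-- for projections, `P ≤ R → R * P = P`. -/
lemma proj_le {P R : H →L[ℂ] H} (hPp : P * P = P) (hPs : star P = P)
    (hRp : R * R = R) (hRs : star R = R) (h : P ≤ R) : R * P = P := by
  have hz : (1 - R) * R = 0 := by rw [sub_mul, one_mul, hRp, sub_self]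
  have hconj := star_left_conjugate_le_conjugate h (1 - R)
  rw [star_sub, star_one, hRs] at hconj
  have hrhs : (1 - R) * R * (1 - R) = 0 := by rw [hz, zero_mul]
  rw [hrhs] at hconj
  have hrepr : (1 - R) * P * (1 - R) = star (P * (1 - R)) * (P * (1 - R)) := by
    rw [star_mul, star_sub, star_one, hRs, hPs]
    calc (1 - R) * P * (1 - R) = (1 - R) * (P * P) * (1 - R) := by rw [hPp]
      _ = (1 - R) * P * (P * (1 - R)) := by simp only [mul_assoc]
  rw [hrepr] at hconj
  have hnn := star_mul_self_nonneg (P * (1 - R))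
  have h0 : P * (1 - R) = 0 :=
    (CStarRing.star_mul_self_eq_zero_iff _).mp (le_antisymm hconj hnn)
  rw [mul_sub, mul_one, sub_eq_zero] at h0
  have h0' : star P = star (P * R) := congrArg star h0
  rw [star_mul, hPs, hRs] at h0'
  exact h0'.symm

variable (h1 : ∑ i, S i * adjoint (S i) ≤ 1)

lemma proj_orth {P R : H →L[ℂ] H} (hPp : P * P = P) (hPs : star P = P)
    (hRp : R * R = R) (hRs : star R = R) (h : P ≤ 1 - R) : R * P = 0 := by
  have hconj := star_left_conjugate_le_conjugate h P
  rw [hPs] at hconj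
  have hL : P * P * P = P := by rw [hPp, hPp]
  have hR' : P * (1 - R) * P = P - P * R * P := by
    rw [mul_sub, mul_one, sub_mul, hPp]
  rw [hL, hR'] at hconj
  have hle0 : P * R * P ≤ 0 := by
    have := sub_nonneg.mpr hconj
    rwa [sub_sub_cancel_left, neg_nonneg] at this
  have hPRP : P * R * P = star (R * P) * (R * P) := by
    rw [star_mul, hPs, hRs]
    calc P * R * P = P * (R * R) * P := by rw [hRp]
      _ = P * R * (R * P) := by simp only [mul_assoc]
  rw [hPRP] at hle0
  exact (CStarRing.star_mul_self_eq_zero_iff _).mp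
    (le_antisymm hle0 (star_mul_self_nonneg _))

include h1 h2 in
lemma E_orth {i j : Fin n} (hij : i ≠ j) :
    (S j * adjoint (S j)) * (S i * adjoint (S i)) = 0 := by
  have hsum : (S i * adjoint (S i)) + (S j * adjoint (S j)) ≤ 1 := by
    have h' : ∑ k ∈ ({i, j} : Finset (Fin n)), S k * adjoint (S k)
        ≤ ∑ k, S k * adjoint (S k) :=
      Finset.sum_le_sum_of_subset_of_nonneg (Finset.subset_univ _)
        (fun k _ _ => E_nonneg k)
    rw [Finset.sum_pair hij] at h'
    exact h'.trans h1
  exact proj_orth (E_proj h2 i) (star_E i) (E_proj h2 j) (star_E j)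
    (le_sub_iff_add_le.mpr hsum)

include h1 h2 in
lemma SastS {i j : Fin n} (hij : i ≠ j) : adjoint (S i) * S j = 0 := by
  have hi : adjoint (S i) * (S i * adjoint (S i)) = adjoint (S i) := by
    rw [← mul_assoc, QSa h2 i]
  have hj : (S j * adjoint (S j)) * S j = S j := by
    rw [mul_assoc, SQ h2 j]
  calc adjoint (S i) * S j
      = (adjoint (S i) * (S i * adjoint (S i))) * ((S j * adjoint (S j)) * S j) := by
        rw [hi, hj]
    _ = adjoint (S i) * ((S i * adjoint (S i)) * (S j * adjoint (S j)) * S j) := by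
        simp only [mul_assoc]
    _ = 0 := by rw [E_orth h2 h1 hij.symm, zero_mul, mul_zero]

include h1 h2 in
lemma SaX1 (i : Fin n) :
    adjoint (S i) * (1 - ∑ j, S j * adjoint (S j)) = 0 := by
  have : adjoint (S i) * ∑ j, S j * adjoint (S j) = adjoint (S i) := by
    rw [Finset.mul_sum]
    rw [Finset.sum_eq_single i]
    · rw [← mul_assoc, QSa h2 i]
    · intro j _ hji
      rw [← mul_assoc, SastS h2 h1 (Ne.symm hji), zero_mul]
    · intro h; exact absurd (Finset.mem_univ i) h
  rw [mul_sub, mul_one, this, sub_self]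

variable (h3 : ∀ i j, ((adjoint (S i) * S i) * (adjoint (S j) * S j) = 0 ∨
      adjoint (S i) * S i = adjoint (S j) * S j))
variable (h4 : ∀ i, ∃ j, S i * adjoint (S i) ≤ adjoint (S j) * S j)

include h2 h3 h4 in
lemma QS (j i : Fin n) :
    (adjoint (S j) * S j) * S i = 0 ∨ (adjoint (S j) * S j) * S i = S i := by
  obtain ⟨j', hj'⟩ := h4 i
  have hQE : (adjoint (S j') * S j') * (S i * adjoint (S i)) = S i * adjoint (S i) :=
    proj_le (E_proj h2 i) (star_E i) (h2 j') (star_Q j') hj'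
  have hQ'S : (adjoint (S j') * S j') * S i = S i := by
    have hES : (S i * adjoint (S i)) * S i = S i := by rw [mul_assoc, SQ h2 i]
    calc (adjoint (S j') * S j') * S i
        = (adjoint (S j') * S j') * ((S i * adjoint (S i)) * S i) := by rw [hES]
      _ = ((adjoint (S j') * S j') * (S i * adjoint (S i))) * S i := by
          simp only [mul_assoc]
      _ = (S i * adjoint (S i)) * S i := by rw [hQE]
      _ = S i := hES
  rcases h3 j j' with hz | he
  · left
    calc (adjoint (S j) * S j) * S i
        = (adjoint (S j) * S j) * ((adjoint (S j') * S j') * S i) := by rw [hQ'S]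
      _ = ((adjoint (S j) * S j) * (adjoint (S j') * S j')) * S i := by
          simp only [mul_assoc]
      _ = 0 := by rw [hz, zero_mul]
  · right; rw [he]; exact hQ'S


/-- `X S k` is the operator `∑_{|w|=k} w(S) w(S)*`. -/
noncomputable def X (S : Fin n → H →L[ℂ] H) (k : ℕ) : H →L[ℂ] H :=
  ∑ f : Fin k → Fin n, wordOp S (List.ofFn f) * adjoint (wordOp S (List.ofFn f))

lemma X_zero : X S 0 = 1 := by
  rw [X]
  rw [Fintype.sum_eq_single (fun i => i.elim0)]
  · simp [wordOp, ← star_eq_adjoint]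
  · intro f hf
    exact absurd (funext fun i => i.elim0) hf

lemma X_succ (k : ℕ) : X S (k + 1) = ∑ i, S i * X S k * adjoint (S i) := by
  rw [X, ← (Fin.consEquiv fun _ : Fin (k + 1) => Fin n).sum_comp
    (fun g => wordOp S (List.ofFn g) * adjoint (wordOp S (List.ofFn g))),
    Fintype.sum_prod_type]
  refine Finset.sum_congr rfl fun i _ => ?_
  rw [X, Finset.mul_sum, Finset.sum_mul]
  refine Finset.sum_congr rfl fun f _ => ?_
  have hof : List.ofFn (Fin.consEquiv (fun _ : Fin (k + 1) => Fin n) (i, f))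
      = i :: List.ofFn f := by
    simp [List.ofFn_succ, Fin.consEquiv]
  rw [hof, wordOp_cons, ← star_eq_adjoint, star_mul, ← star_eq_adjoint (S i),
    star_eq_adjoint (wordOp S (List.ofFn f))]
  simp only [mul_assoc]


lemma X_nonneg (k : ℕ) : (0 : H →L[ℂ] H) ≤ X S k :=
  Finset.sum_nonneg fun f _ => by
    simpa [star_eq_adjoint, adjoint_adjoint] using
      star_mul_self_nonneg (adjoint (wordOp S (List.ofFn f)))

include h1 in
lemma X_le_one (k : ℕ) : X S k ≤ 1 := by
  induction k with
  | zero => rw [X_zero]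
  | succ k ih =>
    rw [X_succ]
    have hterm : ∀ i : Fin n, S i * X S k * adjoint (S i) ≤ S i * adjoint (S i) := by
      intro i
      have := star_right_conjugate_le_conjugate ih (S i)
      rwa [star_eq_adjoint, mul_one] at this
    calc ∑ i, S i * X S k * adjoint (S i) ≤ ∑ i, S i * adjoint (S i) :=
          Finset.sum_le_sum fun i _ => hterm i
      _ ≤ 1 := h1

include h1 in
lemma X_norm_le (k : ℕ) (x : H) : ‖X S k x‖ ≤ ‖x‖ := by
  have h1n : ‖X S k‖ ≤ 1 := by
    calc ‖X S k‖ ≤ ‖(1 : H →L[ℂ] H)‖ :=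
          CStarAlgebra.norm_le_norm_of_nonneg_of_le (X_nonneg k) (X_le_one h1 k)
      _ ≤ 1 := by rw [ContinuousLinearMap.one_def]; exact ContinuousLinearMap.norm_id_le
  calc ‖X S k x‖ ≤ ‖X S k‖ * ‖x‖ := le_opNorm _ _
    _ ≤ 1 * ‖x‖ := by
        exact mul_le_mul_of_nonneg_right h1n (norm_nonneg x)
    _ = ‖x‖ := one_mul _

variable (h3 : ∀ i j, ((adjoint (S i) * S i) * (adjoint (S j) * S j) = 0 ∨
      adjoint (S i) * S i = adjoint (S j) * S j))
variable (h4 : ∀ i, ∃ j, S i * adjoint (S i) ≤ adjoint (S j) * S j)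

include h1 h2 h3 h4 in
lemma key : ∀ (w : List (Fin n)) (k : ℕ), w.length < k →
    X S k * (wordOp S w * (1 - ∑ i, S i * adjoint (S i))) = 0 ∧
    ∀ j, X S k * ((adjoint (S j) * S j) *
      (wordOp S w * (1 - ∑ i, S i * adjoint (S i)))) = 0 := by
  intro w
  induction w with
  | nil =>
    intro k hk
    obtain ⟨m, rfl⟩ : ∃ m, k = m + 1 := ⟨k - 1, by omega⟩
    constructor
    · rw [wordOp_nil, one_mul, X_succ, Finset.sum_mul]
      refine Finset.sum_eq_zero fun i _ => ?_
      calc S i * X S m * adjoint (S i) * (1 - ∑ j, S j * adjoint (S j))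
          = S i * (X S m * (adjoint (S i) * (1 - ∑ j, S j * adjoint (S j)))) := by
            simp only [mul_assoc]
        _ = 0 := by rw [SaX1 h2 h1 i, mul_zero, mul_zero]
    · intro j
      rw [wordOp_nil, one_mul, X_succ, Finset.sum_mul]
      refine Finset.sum_eq_zero fun i _ => ?_
      have hQadj : adjoint (S i) * (adjoint (S j) * S j) = 0 ∨
          adjoint (S i) * (adjoint (S j) * S j) = adjoint (S i) := by
        rcases QS h2 h3 h4 j i with h | h
        · left
          have := congrArg star h
          rwa [star_mul, star_Q, star_eq_adjoint, star_zero] at this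
        · right
          have := congrArg star h
          rwa [star_mul, star_Q, star_eq_adjoint] at this
      calc S i * X S m * adjoint (S i) *
            ((adjoint (S j) * S j) * (1 - ∑ l, S l * adjoint (S l)))
          = S i * (X S m * ((adjoint (S i) * (adjoint (S j) * S j)) *
              (1 - ∑ l, S l * adjoint (S l)))) := by
            simp only [mul_assoc]
        _ = 0 := by
            rcases hQadj with h | h
            · rw [h, zero_mul, mul_zero, mul_zero]
            · rw [h, SaX1 h2 h1 i, mul_zero, mul_zero]
  | cons a w ih =>
    intro k hk
    obtain ⟨m, rfl⟩ : ∃ m, k = m + 1 := ⟨k - 1, by omega⟩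
    have hwm : w.length < m := by
      have := hk
      simp only [List.length_cons] at this
      omega
    have part1 : X S (m + 1) *
        (wordOp S (a :: w) * (1 - ∑ i, S i * adjoint (S i))) = 0 := by
      rw [wordOp_cons, X_succ, Finset.sum_mul]
      refine Finset.sum_eq_zero fun i _ => ?_
      simp only [mul_assoc]
      by_cases hia : i = a
      · subst hia
        rw [← mul_assoc (adjoint (S i)) (S i), (ih m hwm).2 i, mul_zero]
      · rw [← mul_assoc (adjoint (S i)) (S a), SastS h2 h1 hia, zero_mul,
          mul_zero, mul_zero]
    refine ⟨part1, fun j => ?_⟩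
    rw [wordOp_cons, mul_assoc (S a) (wordOp S w),
      ← mul_assoc (adjoint (S j) * S j) (S a)]
    rcases QS h2 h3 h4 j a with h | h
    · rw [h, zero_mul, mul_zero]
    · rw [h]
      rw [wordOp_cons, mul_assoc (S a) (wordOp S w)] at part1
      exact part1

end Stmt9Aux

/-- Let `S = (S₁,…,Sₙ)` satisfy (†) on `H` and set
`X_k = ∑_{|w|=k} w(S)w(S)*`.  Then on the pure subspace
`H_p = ∑_{w∈F⁺ₙ} ⊕ w(S)W` (with `W = Ran(I - ∑ SᵢSᵢ*)`), the sequence `X_k`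
converges to `0` in the strong operator topology. -/
theorem stmt9 {H : Type*} [NormedAddCommGroup H] [InnerProductSpace ℂ H] [CompleteSpace H]
    {n : ℕ} (S : Fin n → H →L[ℂ] H)
    (h1 : ∑ i, S i * adjoint (S i) ≤ 1)
    (h2 : ∀ i, (adjoint (S i) * S i) * (adjoint (S i) * S i) = adjoint (S i) * S i)
    (h3 : ∀ i j, (adjoint (S i) * S i) * (adjoint (S j) * S j) = 0 ∨
      adjoint (S i) * S i = adjoint (S j) * S j)
    (h4 : ∀ i, ∃ j, S i * adjoint (S i) ≤ adjoint (S j) * S j)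
    {κ : Type*} [Fintype κ] (P : κ → H →L[ℂ] H)
    (h5inj : Function.Injective P)
    (h5mem : ∀ i, ∃ k, adjoint (S i) * S i = P k)
    (h5surj : ∀ k, ∃ i, P k = adjoint (S i) * S i)
    (h5 : ∑ k, P k = 1)
    (Hp : Submodule ℂ H)
    (hHp : Hp = (⨆ w : List (Fin n),
      LinearMap.range ((wordOp S w * (1 - ∑ i, S i * adjoint (S i))) :
        H →L[ℂ] H).toLinearMap).topologicalClosure) :
    ∀ x ∈ Hp, Filter.Tendsto
      (fun k : ℕ => (∑ f : Fin k → Fin n,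
        wordOp S (List.ofFn f) * adjoint (wordOp S (List.ofFn f))) x)
      Filter.atTop (nhds 0) := by
  classical
  intro x hx
  rw [hHp] at hx
  set M : Submodule ℂ H := ⨆ w : List (Fin n),
      LinearMap.range ((wordOp S w * (1 - ∑ i, S i * adjoint (S i))) :
        H →L[ℂ] H).toLinearMap with hM
  have hx' : x ∈ closure (M : Set H) := hx
  rw [NormedAddCommGroup.tendsto_nhds_zero]
  intro ε hε
  obtain ⟨y, hyM, hxy⟩ := Metric.mem_closure_iff.mp hx' (ε / 2) (by positivity)
  have hy0 : ∃ N : ℕ, ∀ k, N < k → Stmt9Aux.X S k y = 0 := by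
    refine Submodule.iSup_induction (motive := fun z => ∃ N : ℕ, ∀ k, N < k →
        Stmt9Aux.X S k z = 0) _ hyM ?_ ?_ ?_
    · rintro w z hz
      obtain ⟨u, rfl⟩ := hz
      refine ⟨w.length, fun k hk => ?_⟩
      have hop := (Stmt9Aux.key (h2 := h2) (h1 := h1) (h3 := h3) (h4 := h4) w k hk).1
      have : Stmt9Aux.X S k ((wordOp S w * (1 - ∑ i, S i * adjoint (S i))) u) = 0 := by
        rw [← ContinuousLinearMap.mul_apply, hop, ContinuousLinearMap.zero_apply]
      exact this
    · exact ⟨0, fun k _ => map_zero _⟩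
    · rintro z1 z2 ⟨N1, hN1⟩ ⟨N2, hN2⟩
      refine ⟨max N1 N2, fun k hk => ?_⟩
      rw [map_add, hN1 k (lt_of_le_of_lt (le_max_left _ _) hk),
        hN2 k (lt_of_le_of_lt (le_max_right _ _) hk), add_zero]
  obtain ⟨N, hN⟩ := hy0
  refine Filter.eventually_atTop.mpr ⟨N + 1, fun k hk => ?_⟩
  show ‖Stmt9Aux.X S k x‖ < ε
  have hsplit : Stmt9Aux.X S k x = Stmt9Aux.X S k (x - y) + Stmt9Aux.X S k y := by
    rw [← map_add, sub_add_cancel]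
  rw [hsplit, hN k (by omega), add_zero]
  calc ‖Stmt9Aux.X S k (x - y)‖ ≤ ‖x - y‖ := Stmt9Aux.X_norm_le h1 k _
    _ = dist x y := (dist_eq_norm x y).symm
    _ < ε / 2 := hxy
    _ < ε := by linarith
end

section
/- Let A be a WOT-closed algebra on a Hilbert space H such that there exist two isometries U, V ∈ B(H) with orthogonal ranges (U*U = V*V = I, U*V = 0) commuting with every element of A. Then, given finitely many WOT-continuous linear functionals φ_{ij} (1 ≤ i,j ≤ n) on A, one can use the isometries W_m = words in U,V to produce, from vector functional representations of each φ_{ij}, vectors ζ_i, η_j in H such that φ_{ij}(A) = ⟨Aη_j, ζ_i⟩ for all A ∈ A, provided each φ_{ij} is individually a vector functional. -/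
open ContinuousLinearMap

/-- The weak operator topology on `B(H)`. -/
noncomputable def wotTopology (H : Type*) [NormedAddCommGroup H] [InnerProductSpace ℂ H] :
    TopologicalSpace (H →L[ℂ] H) :=
  TopologicalSpace.induced
    (fun T => (fun p : H × H => (inner (𝕜 := ℂ) (T p.1) p.2 : ℂ))) inferInstance

/-- Let `A` be a WOT-closed algebra on `H` commuting with two isometries `U, V` with
orthogonal ranges.  Given finitely many WOT-continuous functionals `φᵢⱼ` on `A`,
each individually a vector functional `φᵢⱼ(T) = ⟪T xᵢⱼ, yᵢⱼ⟫`, there are vectors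
`ζᵢ, ηⱼ` in `H` with `φᵢⱼ(T) = ⟪T ηⱼ, ζᵢ⟫` for all `T ∈ A` simultaneously. -/
theorem stmt11 {H : Type*} [NormedAddCommGroup H] [InnerProductSpace ℂ H] [CompleteSpace H]
    (A : Subalgebra ℂ (H →L[ℂ] H))
    (hAclosed : @IsClosed _ (wotTopology H) (A : Set (H →L[ℂ] H)))
    (U V : H →L[ℂ] H)
    (hU : adjoint U * U = 1) (hV : adjoint V * V = 1) (hUV : adjoint U * V = 0)
    (hUcomm : ∀ T ∈ A, U * T = T * U) (hVcomm : ∀ T ∈ A, V * T = T * V)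
    {n : ℕ} (x y : Fin n → Fin n → H) :
    ∃ ζ η : Fin n → H, ∀ i j, ∀ T ∈ A,
      inner (𝕜 := ℂ) (T (x i j)) (y i j) = inner (𝕜 := ℂ) (T (η j)) (ζ i) := by
  classical
  -- V* U = 0
  have hVU : adjoint V * U = 0 := by
    have h : star (star U * V) = star (0 : H →L[ℂ] H) := by
      rw [← star_eq_adjoint] at hUV; rw [hUV]
    simpa [star_mul, star_eq_adjoint] using h
  -- ⟪V u, U w⟫ = 0
  have hVUinner : ∀ (u w : H), inner (𝕜 := ℂ) (V u) (U w) = 0 := by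
    intro u w
    have h1 : inner (𝕜 := ℂ) (V u) (U w) = inner (𝕜 := ℂ) u ((adjoint V * U) w) := by
      rw [ContinuousLinearMap.mul_apply]; exact (adjoint_inner_right V u (U w)).symm
    rw [h1, hVU, zero_apply, inner_zero_right]
  -- U and V preserve inner products
  have hUinner : ∀ u v : H, inner (𝕜 := ℂ) (U u) (U v) = inner (𝕜 := ℂ) u v := by
    intro u v
    have h1 : inner (𝕜 := ℂ) u ((adjoint U * U) v) = inner (𝕜 := ℂ) (U u) (U v) := by
      rw [ContinuousLinearMap.mul_apply, adjoint_inner_right]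
    rw [← h1, hU, ContinuousLinearMap.one_apply]
  have hVinner : ∀ u v : H, inner (𝕜 := ℂ) (V u) (V v) = inner (𝕜 := ℂ) u v := by
    intro u v
    have h1 : inner (𝕜 := ℂ) u ((adjoint V * V) v) = inner (𝕜 := ℂ) (V u) (V v) := by
      rw [ContinuousLinearMap.mul_apply, adjoint_inner_right]
    rw [← h1, hV, ContinuousLinearMap.one_apply]
  -- powers of U preserve inner products
  have hUpow : ∀ (a : ℕ) (u v : H),
      inner (𝕜 := ℂ) ((U ^ a) u) ((U ^ a) v) = inner (𝕜 := ℂ) u v := by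
    intro a
    induction a with
    | zero => intro u v; simp
    | succ a ih =>
      intro u v
      rw [pow_succ, ContinuousLinearMap.mul_apply, ContinuousLinearMap.mul_apply, ih, hUinner]
  -- the word isometries
  set W : ℕ → (H →L[ℂ] H) := fun m => U ^ m * V with hW
  -- orthogonality for a < b
  have hlt : ∀ (a b : ℕ), a < b → ∀ u v : H,
      inner (𝕜 := ℂ) (W a u) (W b v) = 0 := by
    intro a b hab u v
    obtain ⟨c, rfl⟩ : ∃ c, b = a + (c + 1) := ⟨b - a - 1, by omega⟩
    have : W (a + (c + 1)) v = (U ^ a) (U ((U ^ c) (V v))) := by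
      rw [hW]
      simp only [ContinuousLinearMap.mul_apply]
      rw [pow_add, ContinuousLinearMap.mul_apply, pow_succ', ContinuousLinearMap.mul_apply]
    rw [this, hW]
    simp only [ContinuousLinearMap.mul_apply]
    rw [hUpow, hVUinner]
  -- key orthogonality
  have hkey : ∀ (a b : ℕ) (u v : H),
      inner (𝕜 := ℂ) (W a u) (W b v) = if a = b then inner (𝕜 := ℂ) u v else 0 := by
    intro a b u v
    rcases lt_trichotomy a b with h | h | h
    · rw [if_neg (by omega), hlt a b h]
    · subst h
      rw [if_pos rfl, hW]
      simp only [ContinuousLinearMap.mul_apply]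
      rw [hUpow, hVinner]
    · rw [if_neg (by omega)]
      have := hlt b a h v u
      calc inner (𝕜 := ℂ) (W a u) (W b v)
          = starRingEnd ℂ (inner (𝕜 := ℂ) (W b v) (W a u)) := (inner_conj_symm _ _).symm
        _ = 0 := by rw [this, map_zero]
  -- W commutes with A
  have hWcomm : ∀ (m : ℕ), ∀ T ∈ A, W m * T = T * W m := by
    have hUp : ∀ (m : ℕ), ∀ T ∈ A, U ^ m * T = T * U ^ m := by
      intro m
      induction m with
      | zero => intro T _; simp
      | succ m ih =>
        intro T hT
        rw [pow_succ, mul_assoc, hUcomm T hT, ← mul_assoc, ih T hT, mul_assoc]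
    intro m T hT
    rw [hW]
    simp only
    rw [mul_assoc, hVcomm T hT, ← mul_assoc, hUp m T hT, mul_assoc]
  -- pair encoding
  set e : Fin n → Fin n → ℕ := fun i j => (i : ℕ) * n + (j : ℕ) with he
  have hinj : ∀ (i j k l : Fin n), e i j = e k l → i = k ∧ j = l := by
    intro i j k l h
    rw [he] at h
    simp only at h
    have hj : (j : ℕ) = (l : ℕ) := by
      have h1 : ((i : ℕ) * n + (j : ℕ)) % n = (j : ℕ) := by
        rw [Nat.mul_add_mod', Nat.mod_eq_of_lt j.isLt]
      have h2 : ((k : ℕ) * n + (l : ℕ)) % n = (l : ℕ) := by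
        rw [Nat.mul_add_mod', Nat.mod_eq_of_lt l.isLt]
      rw [h, h2] at h1
      exact h1.symm
    have hi : (i : ℕ) = (k : ℕ) := by
      have hn : 0 < n := j.pos
      have : (i : ℕ) * n = (k : ℕ) * n := by omega
      exact Nat.eq_of_mul_eq_mul_right hn this
    exact ⟨Fin.ext hi, Fin.ext hj⟩
  -- define the vectors
  refine ⟨fun i => ∑ l, W (e i l) (y i l), fun j => ∑ k, W (e k j) (x k j), ?_⟩
  intro i j T hT
  have hTW : ∀ (m : ℕ) (u : H), T (W m u) = W m (T u) := by
    intro m u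
    have h1 : (T * W m) u = (W m * T) u := by rw [hWcomm m T hT]
    simpa [ContinuousLinearMap.mul_apply] using h1
  calc inner (𝕜 := ℂ) (T (x i j)) (y i j)
      = ∑ k, ∑ l, (if e k j = e i l then inner (𝕜 := ℂ) (T (x k j)) (y i l) else 0) := by
        have hterm : ∀ k l, (if e k j = e i l then inner (𝕜 := ℂ) (T (x k j)) (y i l) else 0)
            = if k = i ∧ l = j then inner (𝕜 := ℂ) (T (x i j)) (y i j) else 0 := by
          intro k l
          by_cases h : e k j = e i l
          · obtain ⟨hk, hj⟩ := hinj _ _ _ _ h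
            subst hk; subst hj
            simp
          · rw [if_neg h, if_neg]
            rintro ⟨rfl, rfl⟩
            exact h rfl
        symm
        calc (∑ k, ∑ l, (if e k j = e i l then inner (𝕜 := ℂ) (T (x k j)) (y i l) else 0))
            = ∑ k : Fin n, (if k = i then inner (𝕜 := ℂ) (T (x i j)) (y i j) else 0) := by
              refine Finset.sum_congr rfl fun k _ => ?_
              by_cases hk : k = i
              · subst hk
                rw [if_pos rfl, Finset.sum_eq_single j]
                · rw [if_pos rfl]
                · intro b _ hb
                  rw [if_neg]
                  intro hcontra
                  exact hb ((hinj _ _ _ _ hcontra).2.symm)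
                · intro hmem
                  exact absurd (Finset.mem_univ j) hmem
              · rw [if_neg hk]
                refine Finset.sum_eq_zero fun l _ => ?_
                rw [if_neg]
                intro hcontra
                exact hk (hinj _ _ _ _ hcontra).1
          _ = inner (𝕜 := ℂ) (T (x i j)) (y i j) := by simp
    _ = ∑ k, ∑ l, inner (𝕜 := ℂ) (T (W (e k j) (x k j))) (W (e i l) (y i l)) := by
        refine Finset.sum_congr rfl fun k _ => Finset.sum_congr rfl fun l _ => ?_
        rw [hTW, hkey]
    _ = inner (𝕜 := ℂ) (T (∑ k, W (e k j) (x k j))) (∑ l, W (e i l) (y i l)) := by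
        rw [map_sum, sum_inner]
        exact Finset.sum_congr rfl fun k _ => (inner_sum _ _ _).symm
end

section
/- Let G be a finite directed cycle graph C_n with n vertices, k a fixed vertex, and w the minimal cycle through k. Then the compression P_k L_{C_n} P_k restricted to P_k H is generated by V = L_w|_{P_k H}, and V is a pure isometry with rank(I - VV*) = n on P_k H. -/
open ContinuousLinearMap
open Fin.NatCast

section Aux

local notation "⟪" x ", " y "⟫" => @inner ℂ _ _ x y

variable {H : Type*} [NormedAddCommGroup H] [InnerProductSpace ℂ H] [CompleteSpace H]
  {n : ℕ} [NeZero n] {ξ : Fin n × ℕ → H}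

/-- extension from the dense family -/
lemma aux_ext (hdense : (Submodule.span ℂ (Set.range ξ)).topologicalClosure = ⊤)
    {F : Type*} [NormedAddCommGroup F] [NormedSpace ℂ F] {T S : H →L[ℂ] F}
    (h : ∀ p, T (ξ p) = S (ξ p)) : T = S := by
  apply ContinuousLinearMap.ext_on
    (Submodule.dense_iff_topologicalClosure_eq_top.mpr hdense)
  rintro _ ⟨p, rfl⟩
  exact h p

lemma aux_inner_ext (hdense : (Submodule.span ℂ (Set.range ξ)).topologicalClosure = ⊤)
    (A B C D : H →L[ℂ] H)
    (h : ∀ p q, ⟪A (ξ p), B (ξ q)⟫ = ⟪C (ξ p), D (ξ q)⟫) (x y : H) :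
    ⟪A x, B y⟫ = ⟪C x, D y⟫ := by
  have step1 : ∀ p (y : H), ⟪A (ξ p), B y⟫ = ⟪C (ξ p), D y⟫ := by
    intro p y
    have h1 : (innerSL ℂ (A (ξ p))).comp B = (innerSL ℂ (C (ξ p))).comp D :=
      aux_ext hdense (fun q => by simpa using h p q)
    simpa using congrFun (congrArg DFunLike.coe h1) y
  have step2 : ∀ (y : H), (innerSL ℂ (B y)).comp A = (innerSL ℂ (D y)).comp C := by
    intro y
    apply aux_ext hdense
    intro p
    simp only [ContinuousLinearMap.comp_apply, innerSL_apply_apply]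
    rw [← inner_conj_symm, step1 p y, inner_conj_symm]
  calc ⟪A x, B y⟫ = (starRingEnd ℂ) ⟪B y, A x⟫ := (inner_conj_symm _ _).symm
    _ = (starRingEnd ℂ) ⟪D y, C x⟫ := by
        rw [show ⟪B y, A x⟫ = ⟪D y, C x⟫ from by
          simpa using congrFun (congrArg DFunLike.coe (step2 y)) x]
    _ = ⟪C x, D y⟫ := inner_conj_symm _ _

/-- If `x` is orthogonal to every basis vector, `x = 0`. -/
lemma aux_eq_zero (hdense : (Submodule.span ℂ (Set.range ξ)).topologicalClosure = ⊤)
    {x : H} (h : ∀ p, ⟪ξ p, x⟫ = 0) : x = 0 := by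
  have h1 : innerSL ℂ x = (0 : H →L[ℂ] ℂ) := by
    apply aux_ext hdense
    intro p
    simp only [innerSL_apply_apply, ContinuousLinearMap.zero_apply]
    rw [← inner_conj_symm, h p, map_zero]
  have h2 : ⟪x, x⟫ = 0 := by
    simpa using congrFun (congrArg DFunLike.coe h1) x
  exact inner_self_eq_zero.mp h2

/-- The building-block operators: `Eop v d` creates the unique path of length `d`
starting at vertex `v`, precomposed with the projection `Pv v`. -/
noncomputable def Eop (Le Pv : Fin n → H →L[ℂ] H) (v : Fin n) (d : ℕ) : H →L[ℂ] H :=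
  (((List.range d).map (fun (t : ℕ) => Le (v + (t : Fin n)))).reverse).prod * Pv v

lemma prod_succ (Le : Fin n → H →L[ℂ] H) (v : Fin n) (d : ℕ) :
    (((List.range (d+1)).map (fun (t : ℕ) => Le (v + (t : Fin n)))).reverse).prod
      = Le (v + (d : Fin n)) *
        (((List.range d).map (fun (t : ℕ) => Le (v + (t : Fin n)))).reverse).prod := by
  rw [List.range_succ]
  simp

lemma val_add_natCast (v : Fin n) (d : ℕ) :
    (((v + (d : Fin n)) : Fin n) : ℕ) = ((v : ℕ) + d) % n := by
  rw [Fin.val_add, Fin.val_natCast]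
  conv_rhs => rw [Nat.add_mod, Nat.mod_eq_of_lt v.isLt]

end Aux

section Aux2

local notation "⟪" x ", " y "⟫" => @inner ℂ _ _ x y

variable {H : Type*} [NormedAddCommGroup H] [InnerProductSpace ℂ H] [CompleteSpace H]
  {n : ℕ} [NeZero n] {ξ : Fin n × ℕ → H}
  {Le : Fin n → H →L[ℂ] H} {Pv : Fin n → H →L[ℂ] H}

variable (hLe : ∀ (e : Fin n) (j : Fin n) (m : ℕ),
      Le e (ξ (j, m)) = if ((j : ℕ) + m) % n = (e : ℕ) then ξ (j, m + 1) else 0)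
    (hPv : ∀ (v : Fin n) (j : Fin n) (m : ℕ),
      Pv v (ξ (j, m)) = if ((j : ℕ) + m) % n = (v : ℕ) then ξ (j, m) else 0)

include hLe in
lemma prod_apply_pos (v : Fin n) :
    ∀ d, 0 < d → ∀ (j : Fin n) (m : ℕ),
      (((List.range d).map (fun (t : ℕ) => Le (v + (t : Fin n)))).reverse).prod (ξ (j, m))
        = if ((j : ℕ) + m) % n = (v : ℕ) then ξ (j, m + d) else 0 := by
  intro d
  induction d with
  | zero => omega
  | succ d ih =>
    intro _ j m
    rcases Nat.eq_zero_or_pos d with hd | hd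
    · subst hd
      rw [show (((List.range 1).map (fun (t : ℕ) => Le (v + (t : Fin n)))).reverse).prod = Le v
        from by simp [List.range_succ]]
      exact hLe v j m
    · rw [prod_succ, ContinuousLinearMap.mul_apply, ih hd j m]
      split_ifs with hc
      · rw [hLe]
        rw [if_pos, show m + d + 1 = m + (d + 1) from by ring]
        rw [val_add_natCast, ← Nat.add_assoc, ← Nat.mod_add_mod, hc]
      · exact map_zero _

include hLe hPv in
lemma Eop_apply (v : Fin n) (d : ℕ) (j : Fin n) (m : ℕ) :
    Eop Le Pv v d (ξ (j, m)) = if ((j : ℕ) + m) % n = (v : ℕ) then ξ (j, m + d) else 0 := by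
  rw [Eop, ContinuousLinearMap.mul_apply, hPv]
  rcases Nat.eq_zero_or_pos d with hd | hd
  · subst hd
    split_ifs <;> simp
  · split_ifs with hc
    · rw [prod_apply_pos hLe v d hd j m, if_pos hc]
    · exact map_zero _

end Aux2

local notation "⟪" x ", " y "⟫" => @inner ℂ _ _ x y

/-- Let `G = C_n` be the directed cycle graph with `n` vertices `Fin n` (one edge
`e` from vertex `e` to vertex `e + 1`).  Its Fock space `H_G = ℓ²(F⁺(C_n))` has an
orthonormal basis `ξ(j, m)` indexed by the initial vertex `j` and length `m` of a
path (the final vertex being `j + m mod n`); `L_e` are the edge creation operators,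
`P_v` the vertex projections, `k` a fixed vertex and `L_w` the creation operator of
the minimal cycle `w = kwk` (of length `n`).  Then the compression
`P_k 𝔏_{C_n} P_k`, restricted to `P_k H`, is the WOT-closed (non-unital) algebra
generated by `V = L_w|_{P_kH}` and `P_k`; moreover `V` is a pure isometry on
`P_k H` with `rank(I - VV*) = n`. -/
theorem stmt13 {H : Type*} [NormedAddCommGroup H] [InnerProductSpace ℂ H] [CompleteSpace H]
    {n : ℕ} [NeZero n]
    (ξ : Fin n × ℕ → H)
    (horth : Orthonormal ℂ ξ)
    (hdense : (Submodule.span ℂ (Set.range ξ)).topologicalClosure = ⊤)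
    (Le : Fin n → H →L[ℂ] H)
    (hLe : ∀ (e : Fin n) (j : Fin n) (m : ℕ),
      Le e (ξ (j, m)) = if ((j : ℕ) + m) % n = (e : ℕ) then ξ (j, m + 1) else 0)
    (Pv : Fin n → H →L[ℂ] H)
    (hPv : ∀ (v : Fin n) (j : Fin n) (m : ℕ),
      Pv v (ξ (j, m)) = if ((j : ℕ) + m) % n = (v : ℕ) then ξ (j, m) else 0)
    (k : Fin n)
    (Lw : H →L[ℂ] H)
    (hLw : Lw = (((List.range n).map (fun (t : ℕ) => Le (k + (t : Fin n)))).reverse).prod) :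
    -- the compression of `𝔏_{C_n}` to `P_k H` is the WOT-closed algebra
    -- generated by `L_w` and `P_k`
    ((fun T => Pv k * T * Pv k) ''
        (@closure _ (wotTopology H)
          ((Algebra.adjoin ℂ (Set.range Le ∪ Set.range Pv) :
            Subalgebra ℂ (H →L[ℂ] H)) : Set (H →L[ℂ] H)))
      = @closure _ (wotTopology H)
          ((NonUnitalAlgebra.adjoin ℂ ({Lw, Pv k} : Set (H →L[ℂ] H)) :
            NonUnitalSubalgebra ℂ (H →L[ℂ] H)) : Set (H →L[ℂ] H))) ∧
    -- `V = L_w|_{P_k H}` is an isometry of `P_k H` into itself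
    (∀ x : H, Pv k x = x → ‖Lw x‖ = ‖x‖ ∧ Pv k (Lw x) = Lw x) ∧
    -- `V` is pure
    (∀ x : H, Pv k x = x → (∀ m : ℕ, ∃ y : H, Pv k y = y ∧ (Lw ^ m) y = x) → x = 0) ∧
    -- `rank(I - VV*) = n`: the complement of `L_w(P_k H)` inside `P_k H`
    Module.finrank ℂ
      ((LinearMap.range (Pv k).toLinearMap) ⊓
        (LinearMap.range ((Lw * Pv k) : H →L[ℂ] H).toLinearMap)ᗮ : Submodule ℂ H) = n := by
  have horthite := orthonormal_iff_ite.mp horth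
  -- basic facts
  have hnpos : 0 < n := Nat.pos_of_ne_zero (NeZero.ne n)
  have hPvE : ∀ v, Pv v = Eop Le Pv v 0 := by
    intro v
    simp [Eop]
  have hLeE : ∀ e, Le e = Eop Le Pv e 1 := by
    intro e
    apply aux_ext hdense
    rintro ⟨j, m⟩
    rw [hLe, Eop_apply hLe hPv]
  have hLwE : Lw = Eop Le Pv k n := by
    apply aux_ext hdense
    rintro ⟨j, m⟩
    rw [hLw, prod_apply_pos hLe k n hnpos j m, Eop_apply hLe hPv]
  have hEmul : ∀ (v' : Fin n) (d' : ℕ) (v : Fin n) (d : ℕ),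
      Eop Le Pv v' d' * Eop Le Pv v d
        = if ((v : ℕ) + d) % n = (v' : ℕ) then Eop Le Pv v (d + d') else 0 := by
    intro v' d' v d
    apply aux_ext hdense
    rintro ⟨j, m⟩
    by_cases hc : ((j : ℕ) + m) % n = (v : ℕ)
    · have hc' : ((j : ℕ) + (m + d)) % n = ((v : ℕ) + d) % n := by
        rw [← Nat.add_assoc, ← Nat.mod_add_mod, hc]
      rw [ContinuousLinearMap.mul_apply, Eop_apply hLe hPv, if_pos hc,
        Eop_apply hLe hPv, hc']
      by_cases hc2 : ((v : ℕ) + d) % n = (v' : ℕ)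
      · rw [if_pos hc2, if_pos hc2, Eop_apply hLe hPv, if_pos hc, Nat.add_assoc]
      · rw [if_neg hc2, if_neg hc2, ContinuousLinearMap.zero_apply]
    · rw [ContinuousLinearMap.mul_apply, Eop_apply hLe hPv, if_neg hc, map_zero]
      by_cases hc2 : ((v : ℕ) + d) % n = (v' : ℕ)
      · rw [if_pos hc2, Eop_apply hLe hPv, if_neg hc]
      · rw [if_neg hc2, ContinuousLinearMap.zero_apply]
  have hkk : ((k : ℕ) + 0) % n = (k : ℕ) := by
    simpa using Nat.mod_eq_of_lt k.isLt
  -- Pv k is idempotent, Pv k ∘ Lw = Lw = Lw ∘ Pv k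
  have hPvP : Pv k * Pv k = Pv k := by
    rw [hPvE k, hEmul, if_pos hkk]
  have hkn : ((k : ℕ) + n) % n = (k : ℕ) := by
    rw [Nat.add_mod_right]; exact Nat.mod_eq_of_lt k.isLt
  have hPvLw : Pv k * Lw = Lw := by
    rw [hPvE k, hLwE, hEmul, if_pos hkn, Nat.add_zero]
  have hLwPv : Lw * Pv k = Lw := by
    rw [hPvE k, hLwE, hEmul, if_pos hkk, Nat.zero_add]
  have hLwxi : ∀ (j : Fin n) (m : ℕ),
      Lw (ξ (j, m)) = if ((j : ℕ) + m) % n = (k : ℕ) then ξ (j, m + n) else 0 := by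
    intro j m
    rw [hLwE, Eop_apply hLe hPv]
  -- self-adjointness of Pv k
  have hsa : ∀ x y : H, ⟪Pv k x, y⟫ = ⟪x, Pv k y⟫ := by
    have := aux_inner_ext hdense (Pv k) (ContinuousLinearMap.id ℂ H)
      (ContinuousLinearMap.id ℂ H) (Pv k) ?_
    · intro x y
      simpa using this x y
    · rintro ⟨j, m⟩ ⟨j', m'⟩
      simp only [ContinuousLinearMap.id_apply, hPv]
      split_ifs with h1 h2 h2
      · rfl
      · rw [inner_zero_right, horthite, if_neg]
        intro h
        obtain ⟨h3, h4⟩ := Prod.mk.inj h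
        subst h3; subst h4; exact h2 h1
      · rw [inner_zero_left, horthite, if_neg]
        intro h
        obtain ⟨h3, h4⟩ := Prod.mk.inj h
        subst h3; subst h4; exact h1 h2
      · rw [inner_zero_left, inner_zero_right]
  -- ⟪Lw x, Lw y⟫ = ⟪Pv k x, y⟫
  have hiso : ∀ x y : H, ⟪Lw x, Lw y⟫ = ⟪Pv k x, y⟫ := by
    have := aux_inner_ext hdense Lw Lw (Pv k) (ContinuousLinearMap.id ℂ H) ?_
    · intro x y
      simpa using this x y
    · rintro ⟨j, m⟩ ⟨j', m'⟩
      simp only [ContinuousLinearMap.id_apply, hLwxi, hPv]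
      split_ifs with h1 h2 h2
      · rw [horthite, horthite]
        congr 1
        rw [eq_iff_iff, Prod.ext_iff, Prod.ext_iff]
        simp only
        constructor
        · rintro ⟨ha, hb⟩; exact ⟨ha, by omega⟩
        · rintro ⟨ha, hb⟩; exact ⟨ha, by omega⟩
      · rw [inner_zero_right, horthite, if_neg]
        intro h
        obtain ⟨h3, h4⟩ := Prod.mk.inj h
        subst h3; subst h4; exact h2 h1
      · rw [inner_zero_left, inner_zero_left]
      · rw [inner_zero_left, inner_zero_left]
  refine ⟨?_, ?_, ?_, ?_⟩
  · -- part 1 : WOT algebra statement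
    -- the span of the Eop's
    set M : Submodule ℂ (H →L[ℂ] H) :=
      Submodule.span ℂ (Set.range fun p : Fin n × ℕ => Eop Le Pv p.1 p.2) with hM
    have hEopM : ∀ v d, Eop Le Pv v d ∈ M := fun v d =>
      Submodule.subset_span ⟨(v, d), rfl⟩
    have honeM : (1 : H →L[ℂ] H) ∈ M := by
      have h1 : (1 : H →L[ℂ] H) = ∑ v : Fin n, Eop Le Pv v 0 := by
        apply aux_ext hdense
        rintro ⟨j, m⟩
        rw [ContinuousLinearMap.one_apply]
        rw [show ((∑ v : Fin n, Eop Le Pv v 0) (ξ (j, m)))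
          = ∑ v : Fin n, Eop Le Pv v 0 (ξ (j, m)) from ContinuousLinearMap.sum_apply _ _ _]
        simp only [Eop_apply hLe hPv]
        rw [Finset.sum_congr rfl (g := fun v =>
          if v = (((j : ℕ) + m : ℕ) : Fin n) then ξ (j, m + 0) else 0)]
        · rw [Finset.sum_ite_eq' Finset.univ ((((j : ℕ) + m : ℕ)) : Fin n)
            (fun _ => ξ (j, m + 0))]
          simp
        · intro v _
          congr 1
          rw [eq_iff_iff]
          constructor
          · intro hv
            ext
            rw [Fin.val_natCast, hv]
          · intro hv
            subst hv
            rw [Fin.val_natCast]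
      rw [h1]
      exact Submodule.sum_mem _ fun v _ => hEopM v 0
    have hmulM : ∀ a ∈ M, ∀ b ∈ M, a * b ∈ M := by
      intro a ha b hb
      induction ha using Submodule.span_induction with
      | mem x hx =>
        induction hb using Submodule.span_induction with
        | mem y hy =>
          obtain ⟨p, rfl⟩ := hx
          obtain ⟨q, rfl⟩ := hy
          rw [hEmul]
          split_ifs
          · exact hEopM _ _
          · exact zero_mem M
        | zero => simpa using zero_mem M
        | add y z _ _ hy hz => rw [mul_add]; exact add_mem hy hz
        | smul c y _ hy => rw [mul_smul_comm]; exact Submodule.smul_mem _ _ hy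
      | zero => simpa using zero_mem M
      | add x y _ _ hx' hy' => rw [add_mul]; exact add_mem hx' hy'
      | smul c x _ hx' => rw [smul_mul_assoc]; exact Submodule.smul_mem _ _ hx'
    -- the algebra generated by Lw, Pv k
    set B := (NonUnitalAlgebra.adjoin ℂ ({Lw, Pv k} : Set (H →L[ℂ] H))) with hB
    have hLwB : Lw ∈ B := NonUnitalAlgebra.subset_adjoin ℂ (Set.mem_insert _ _)
    have hPvB : Pv k ∈ B :=
      NonUnitalAlgebra.subset_adjoin ℂ (Set.mem_insert_of_mem _ rfl)
    -- Eop k (n*a) ∈ B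
    have hEpowB : ∀ a : ℕ, Eop Le Pv k (n * (a + 1)) ∈ B := by
      intro a
      induction a with
      | zero =>
        have h := hEmul k n k 0
        rw [if_pos hkk] at h
        rw [show n * (0 + 1) = 0 + n from by ring, ← h, ← hPvE, ← hLwE]
        exact mul_mem hLwB hPvB
      | succ a ih =>
        have : Eop Le Pv k (n * (a + 1) + n) = Eop Le Pv k n * Eop Le Pv k (n * (a + 1)) := by
          rw [hEmul, if_pos]
          rw [Nat.add_mul_mod_self_left]
          exact Nat.mod_eq_of_lt k.isLt
        rw [show n * (a + 1 + 1) = n * (a + 1) + n from by ring, this, ← hLwE]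
        exact mul_mem hLwB ih
    have hEB : ∀ d : ℕ, d % n = 0 → Eop Le Pv k d ∈ B := by
      intro d hd
      rcases Nat.eq_zero_or_pos d with h0 | h0
      · subst h0
        rw [← hPvE]
        exact hPvB
      · obtain ⟨a, ha⟩ := (Nat.dvd_of_mod_eq_zero hd)
        have hapos : 0 < a := by
          rcases Nat.eq_zero_or_pos a with h | h
          · subst h; rw [Nat.mul_zero] at ha; omega
          · exact h
        obtain ⟨a', rfl⟩ := Nat.exists_eq_add_of_lt hapos
        rw [ha, show 0 + a' + 1 = a' + 1 from by ring]
        exact hEpowB a'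
    -- compression of each Eop lands in B
    have hcomp : ∀ (v : Fin n) (d : ℕ), Pv k * Eop Le Pv v d * Pv k ∈ B := by
      intro v d
      have hklt := k.isLt
      rw [hPvE k]
      by_cases h1 : ((v : ℕ) + d) % n = (k : ℕ)
      · rw [hEmul k 0 v d, if_pos h1, Nat.add_zero, hEmul v d k 0]
        by_cases h2 : ((k : ℕ) + 0) % n = (v : ℕ)
        · rw [if_pos h2, Nat.zero_add]
          apply hEB
          have hv : (v : ℕ) = (k : ℕ) := by omega
          have h1' : ((k : ℕ) + d) % n = (k : ℕ) := by
            have h0 := h1; rw [hv] at h0; exact h0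
          have h3 : ((k : ℕ) + d % n) % n = (k : ℕ) := by
            rw [Nat.add_mod_mod]; exact h1'
          have h4 : d % n < n := Nat.mod_lt _ hnpos
          rcases Nat.lt_or_ge ((k : ℕ) + d % n) n with h5 | h5
          · rw [Nat.mod_eq_of_lt h5] at h3; omega
          · have h6 : ((k : ℕ) + d % n) % n = ((k : ℕ) + d % n) - n := by
              rw [Nat.mod_eq_sub_mod h5, Nat.mod_eq_of_lt (by omega)]
            omega
        · rw [if_neg h2]; exact zero_mem B
      · rw [hEmul k 0 v d, if_neg h1, zero_mul]; exact zero_mem B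
    -- adjoin is contained in the span of the Eop's
    have hMadj : ∀ A ∈ Algebra.adjoin ℂ (Set.range Le ∪ Set.range Pv), A ∈ M := by
      intro A hA
      induction hA using Algebra.adjoin_induction with
      | mem x hx =>
        rcases hx with ⟨e, rfl⟩ | ⟨v, rfl⟩
        · rw [hLeE]; exact hEopM e 1
        · rw [hPvE]; exact hEopM v 0
      | algebraMap r =>
        rw [Algebra.algebraMap_eq_smul_one]
        exact Submodule.smul_mem _ _ honeM
      | add x y _ _ hx hy => exact add_mem hx hy
      | mul x y _ _ hx hy => exact hmulM x hx y hy
    have hPhiB : ∀ A ∈ Algebra.adjoin ℂ (Set.range Le ∪ Set.range Pv),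
        Pv k * A * Pv k ∈ B := by
      intro A hA
      have hAM := hMadj A hA
      clear hA
      induction hAM using Submodule.span_induction with
      | mem x hx =>
        obtain ⟨⟨v, d⟩, rfl⟩ := hx
        exact hcomp v d
      | zero => rw [mul_zero, zero_mul]; exact zero_mem B
      | add x y _ _ hx hy => rw [mul_add, add_mul]; exact add_mem hx hy
      | smul c x _ hx =>
        rw [mul_smul_comm, smul_mul_assoc]
        exact SMulMemClass.smul_mem c hx
    have hfix0 : ∀ T ∈ B, Pv k * T = T ∧ T * Pv k = T := by
      intro T hT
      induction hT using NonUnitalAlgebra.adjoin_induction with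
      | mem x hx =>
        rcases hx with rfl | hx
        · exact ⟨hPvLw, hLwPv⟩
        · rw [Set.mem_singleton_iff] at hx
          subst hx
          exact ⟨hPvP, hPvP⟩
      | add x y _ _ hx hy =>
        exact ⟨by rw [mul_add, hx.1, hy.1], by rw [add_mul, hx.2, hy.2]⟩
      | zero => exact ⟨by rw [mul_zero], by rw [zero_mul]⟩
      | mul x y _ _ hx hy =>
        exact ⟨by rw [← mul_assoc, hx.1], by rw [mul_assoc, hy.2]⟩
      | smul c x _ hx =>
        exact ⟨by rw [mul_smul_comm, hx.1], by rw [smul_mul_assoc, hx.2]⟩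
    have hBsubA : (B : Set (H →L[ℂ] H))
        ⊆ ((Algebra.adjoin ℂ (Set.range Le ∪ Set.range Pv) :
          Subalgebra ℂ (H →L[ℂ] H)) : Set (H →L[ℂ] H)) := by
      intro x hx
      induction hx using NonUnitalAlgebra.adjoin_induction with
      | mem x hx =>
        rcases hx with rfl | hx
        · rw [hLw]
          apply Subalgebra.list_prod_mem
          intro a ha
          rw [List.mem_reverse, List.mem_map] at ha
          obtain ⟨t, _, rfl⟩ := ha
          exact Algebra.subset_adjoin (Set.mem_union_left _ ⟨_, rfl⟩)
        · rw [Set.mem_singleton_iff] at hx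
          subst hx
          exact Algebra.subset_adjoin (Set.mem_union_right _ ⟨k, rfl⟩)
      | add x y _ _ hx hy => exact add_mem hx hy
      | zero => exact zero_mem _
      | mul x y _ _ hx hy => exact mul_mem hx hy
      | smul c x _ hx => exact Subalgebra.smul_mem _ hx c
    -- now the topological part
    letI instW : TopologicalSpace (H →L[ℂ] H) := wotTopology H
    have hcont : Continuous fun T : H →L[ℂ] H => Pv k * T * Pv k := by
      apply continuous_induced_rng.2
      apply continuous_pi
      intro p
      show Continuous fun T : H →L[ℂ] H =>
        (inner (𝕜 := ℂ) ((Pv k * T * Pv k) p.1) p.2 : ℂ)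
      have heq : (fun T : H →L[ℂ] H =>
            (inner (𝕜 := ℂ) ((Pv k * T * Pv k) p.1) p.2 : ℂ))
          = fun T : H →L[ℂ] H =>
            (inner (𝕜 := ℂ) (T (Pv k p.1)) (Pv k p.2) : ℂ) := by
        funext T
        rw [ContinuousLinearMap.mul_apply, ContinuousLinearMap.mul_apply]
        exact hsa (T (Pv k p.1)) p.2
      rw [heq]
      exact (continuous_apply (A := fun _ : H × H => ℂ)
        ((Pv k p.1, Pv k p.2) : H × H)).comp
        (continuous_induced_dom
          (f := fun T : H →L[ℂ] H => (fun q : H × H => (inner (𝕜 := ℂ) (T q.1) q.2 : ℂ))))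
    have hinj : Function.Injective
        (fun T : H →L[ℂ] H => (fun p : H × H => (inner (𝕜 := ℂ) (T p.1) p.2 : ℂ))) := by
      intro T U h
      ext x
      apply ext_inner_right ℂ
      intro v
      exact congrFun h (x, v)
    have hemb : Topology.IsEmbedding
        (fun T : H →L[ℂ] H => (fun p : H × H => (inner (𝕜 := ℂ) (T p.1) p.2 : ℂ))) :=
      ⟨⟨rfl⟩, hinj⟩
    haveI hT2 : T2Space (H →L[ℂ] H) := hemb.t2Space
    have hclosedfix : IsClosed {T : H →L[ℂ] H | Pv k * T * Pv k = T} :=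
      isClosed_eq hcont continuous_id
    ext T0
    constructor
    · rintro ⟨T, hT, rfl⟩
      have h1 := image_closure_subset_closure_image (s :=
        ((Algebra.adjoin ℂ (Set.range Le ∪ Set.range Pv) :
          Subalgebra ℂ (H →L[ℂ] H)) : Set (H →L[ℂ] H))) hcont
      have h2 : ((fun T => Pv k * T * Pv k) ''
          ((Algebra.adjoin ℂ (Set.range Le ∪ Set.range Pv) :
            Subalgebra ℂ (H →L[ℂ] H)) : Set (H →L[ℂ] H)))
          ⊆ (B : Set (H →L[ℂ] H)) := by
        rintro _ ⟨A, hA, rfl⟩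
        exact hPhiB A hA
      exact closure_mono h2 (h1 ⟨T, hT, rfl⟩)
    · intro hT0
      have h3 : T0 ∈ closure ((Algebra.adjoin ℂ (Set.range Le ∪ Set.range Pv) :
          Subalgebra ℂ (H →L[ℂ] H)) : Set (H →L[ℂ] H)) :=
        closure_mono hBsubA hT0
      have h5 : (B : Set (H →L[ℂ] H)) ⊆ {T : H →L[ℂ] H | Pv k * T * Pv k = T} := by
        intro T hT
        obtain ⟨hl, hr⟩ := hfix0 T hT
        show Pv k * T * Pv k = T
        rw [mul_assoc, hr, hl]
      have h4 : Pv k * T0 * Pv k = T0 := closure_minimal h5 hclosedfix hT0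
      exact ⟨T0, h3, h4⟩
  · -- part 2 : isometry
    intro x hx
    constructor
    · have h1 : ⟪Lw x, Lw x⟫ = ⟪x, x⟫ := by rw [hiso, hx]
      rw [norm_eq_sqrt_re_inner (𝕜 := ℂ) (Lw x), norm_eq_sqrt_re_inner (𝕜 := ℂ) x, h1]
    · have := congrFun (congrArg DFunLike.coe hPvLw) x
      simpa using this
  · -- part 3 : purity
    intro x hx hpure
    apply aux_eq_zero hdense
    rintro ⟨j, l⟩
    obtain ⟨y, hy1, hy2⟩ := hpure (l + 1)
    rw [← hy2]
    -- the key claim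
    have claim : ∀ (m : ℕ) (j : Fin n) (l : ℕ), l < m * n → ∀ z : H,
        ⟪ξ (j, l), (Lw ^ m) z⟫ = 0 := by
      intro m
      induction m with
      | zero => intro j l hl z; rw [Nat.zero_mul] at hl; omega
      | succ m ih =>
        intro j l hl z
        rw [pow_succ']
        rw [ContinuousLinearMap.mul_apply]
        rcases Nat.lt_or_ge l n with hln | hln
        · -- functional is zero
          have hz : (innerSL ℂ (ξ (j, l))).comp Lw = 0 := by
            apply aux_ext hdense
            rintro ⟨j', m'⟩
            simp only [ContinuousLinearMap.comp_apply, innerSL_apply_apply,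
              ContinuousLinearMap.zero_apply, hLwxi]
            split_ifs with h1
            · rw [horthite, if_neg]
              intro h
              obtain ⟨h3, h4⟩ := Prod.mk.inj h
              omega
            · exact inner_zero_right _
          simpa using congrFun (congrArg DFunLike.coe hz) ((Lw ^ m) z)
        · have hz : (innerSL ℂ (ξ (j, l))).comp Lw
              = if ((j : ℕ) + (l - n)) % n = (k : ℕ) then innerSL ℂ (ξ (j, l - n))
                else (0 : H →L[ℂ] ℂ) := by
            apply aux_ext hdense
            rintro ⟨j', m'⟩
            simp only [ContinuousLinearMap.comp_apply, innerSL_apply_apply, hLwxi,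
              apply_ite (fun (T : H →L[ℂ] ℂ) => T (ξ (j', m'))),
              ContinuousLinearMap.zero_apply]
            split_ifs with h1 h2 h2
            · rw [horthite, horthite]
              congr 1
              rw [eq_iff_iff, Prod.mk.injEq, Prod.mk.injEq]
              constructor
              · rintro ⟨hj, hm⟩
                exact ⟨hj, by omega⟩
              · rintro ⟨hj, hm⟩
                exact ⟨hj, by omega⟩
            · rw [horthite, if_neg]
              intro h
              obtain ⟨hj, hm⟩ := Prod.mk.inj h
              subst hj
              apply h2
              rw [show l - n = m' from by omega]
              exact h1
            · rw [inner_zero_right, horthite, if_neg]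
              intro h
              obtain ⟨hj, hm⟩ := Prod.mk.inj h
              subst hj
              apply h1
              rw [← hm]
              exact h2
            · exact inner_zero_right _
          have := congrFun (congrArg DFunLike.coe hz) ((Lw ^ m) z)
          simp only [ContinuousLinearMap.comp_apply, innerSL_apply_apply] at this
          rw [this]
          have hl' : l < m * n + n := by
            have h9 := hl
            rw [show (m + 1) * n = m * n + n from by ring] at h9
            exact h9
          split_ifs
          · have h9 := ih j (l - n) (by omega) z
            simpa using h9
          · simp
    exact claim (l + 1) j l
      (by calc l < l + 1 := Nat.lt_succ_self l
            _ = (l + 1) * 1 := by ring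
            _ ≤ (l + 1) * n := Nat.mul_le_mul_left _ hnpos) y
  · -- part 4 : rank n
    have hklt := k.isLt
    have hcond : ∀ (m : ℕ), (((k - (m : Fin n) : Fin n) : ℕ) + m) % n = (k : ℕ) := by
      intro m
      have h := val_add_natCast (k - (m : Fin n)) m
      rw [sub_add_cancel] at h
      exact h.symm
    have hη : ∀ (m : ℕ),
        Pv k (ξ (k - (m : Fin n), m)) = ξ (k - (m : Fin n), m) := by
      intro m; rw [hPv, if_pos (hcond m)]
    have hLwPvξ : ∀ (j : Fin n) (m : ℕ), (Lw * Pv k) (ξ (j, m))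
        = if ((j : ℕ) + m) % n = (k : ℕ) then ξ (j, m + n) else 0 := by
      intro j m
      rw [ContinuousLinearMap.mul_apply, hPv]
      split_ifs with h
      · rw [hLwxi, if_pos h]
      · exact map_zero _
    have hgen : ∀ i : Fin n, ξ (k - (((i : ℕ) : Fin n)), (i : ℕ))
        ∈ ((LinearMap.range (Pv k).toLinearMap) ⊓
            (LinearMap.range ((Lw * Pv k) : H →L[ℂ] H).toLinearMap)ᗮ : Submodule ℂ H) := by
      intro i
      have hilt := i.isLt
      refine Submodule.mem_inf.mpr ⟨?_, ?_⟩
      · exact ⟨ξ (k - (((i : ℕ) : Fin n)), (i : ℕ)), hη (i : ℕ)⟩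
      · rw [Submodule.mem_orthogonal]
        rintro u ⟨y, rfl⟩
        have hfun : (innerSL ℂ (ξ (k - (((i : ℕ) : Fin n)), (i : ℕ)))).comp (Lw * Pv k)
            = 0 := by
          apply aux_ext hdense
          rintro ⟨j, m⟩
          simp only [ContinuousLinearMap.comp_apply, innerSL_apply_apply,
            ContinuousLinearMap.zero_apply, hLwPvξ]
          split_ifs with h
          · rw [horthite, if_neg]
            intro hh
            obtain ⟨h3, h4⟩ := Prod.mk.inj hh
            omega
          · exact inner_zero_right _
        have h6 : ⟪ξ (k - (((i : ℕ) : Fin n)), (i : ℕ)), (Lw * Pv k) y⟫ = 0 := by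
          simpa using congrFun (congrArg DFunLike.coe hfun) y
        show ⟪(Lw * Pv k) y, ξ (k - (((i : ℕ) : Fin n)), (i : ℕ))⟫ = 0
        rw [← inner_conj_symm, h6, map_zero]
    have hPvx : ∀ x : H, x ∈ LinearMap.range (Pv k).toLinearMap → Pv k x = x := by
      rintro x ⟨z, rfl⟩
      show Pv k (Pv k z) = Pv k z
      have h := congrFun (congrArg DFunLike.coe hPvP) z
      simpa using h
    have hxinner : ∀ x : H, Pv k x = x → ∀ (j : Fin n) (m : ℕ),
        ((j : ℕ) + m) % n ≠ (k : ℕ) → ⟪ξ (j, m), x⟫ = 0 := by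
      intro x hx j m hc
      have h7 : ⟪Pv k (ξ (j, m)), x⟫ = ⟪ξ (j, m), Pv k x⟫ := hsa _ _
      rw [hPv, if_neg hc, hx] at h7
      simpa using h7.symm
    have hspan : ((LinearMap.range (Pv k).toLinearMap) ⊓
            (LinearMap.range ((Lw * Pv k) : H →L[ℂ] H).toLinearMap)ᗮ : Submodule ℂ H)
        = Submodule.span ℂ
            (Set.range fun i : Fin n => ξ (k - (((i : ℕ) : Fin n)), (i : ℕ))) := by
      apply le_antisymm
      · intro x hx
        obtain ⟨hx1, hx2⟩ := Submodule.mem_inf.mp hx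
        have hx1' : Pv k x = x := hPvx x hx1
        have hrep : x = ∑ i ∈ Finset.range n,
            ⟪ξ (k - ((i : Fin n)), i), x⟫ • ξ (k - ((i : Fin n)), i) := by
          have hy : ∀ p, ⟪ξ p, x - ∑ i ∈ Finset.range n,
              ⟪ξ (k - ((i : Fin n)), i), x⟫ • ξ (k - ((i : Fin n)), i)⟫ = 0 := by
            rintro ⟨j, m⟩
            rw [inner_sub_right, inner_sum]
            simp only [inner_smul_right]
            by_cases hc : ((j : ℕ) + m) % n = (k : ℕ)
            · have hj : j = k - (m : Fin n) := by
                have hjm : j + (m : Fin n) = k := by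
                  apply Fin.ext
                  rw [val_add_natCast]
                  exact hc
                exact eq_sub_of_add_eq hjm
              subst hj
              rcases Nat.lt_or_ge m n with hm | hm
              · rw [Finset.sum_eq_single m]
                · rw [horthite, if_pos rfl, mul_one, sub_self]
                · intro i hi hne
                  rw [horthite, if_neg, mul_zero]
                  intro h
                  obtain ⟨h3, h4⟩ := Prod.mk.inj h
                  exact hne h4.symm
                · intro hnm
                  exact absurd (Finset.mem_range.mpr hm) hnm
              · have hmem : ξ (k - (m : Fin n), m)
                    ∈ LinearMap.range ((Lw * Pv k) : H →L[ℂ] H).toLinearMap := by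
                  refine ⟨ξ (k - (((m - n : ℕ) : Fin n)), m - n), ?_⟩
                  show (Lw * Pv k) (ξ (k - (((m - n : ℕ) : Fin n)), m - n)) = _
                  rw [hLwPvξ, if_pos (hcond (m - n))]
                  have hc2 : ((m - n : ℕ) : Fin n) = (m : Fin n) := by
                    conv_rhs => rw [show m = (m - n) + n from (Nat.sub_add_cancel hm).symm]
                    rw [Nat.cast_add, Fin.natCast_self, add_zero]
                  rw [hc2, Nat.sub_add_cancel hm]
                have h8 := (Submodule.mem_orthogonal _ _).mp hx2 _ hmem
                rw [h8, Finset.sum_eq_zero, sub_zero]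
                intro i hi
                rw [horthite, if_neg, mul_zero]
                intro h
                obtain ⟨h3, h4⟩ := Prod.mk.inj h
                have := Finset.mem_range.mp hi
                omega
            · rw [hxinner x hx1' j m hc, Finset.sum_eq_zero, sub_zero]
              intro i hi
              rw [horthite, if_neg, mul_zero]
              intro h
              obtain ⟨h3, h4⟩ := Prod.mk.inj h
              apply hc
              subst h3
              subst h4
              exact hcond m
          have hz := aux_eq_zero hdense hy
          exact sub_eq_zero.mp hz
        rw [hrep]
        apply Submodule.sum_mem
        intro i hi
        apply Submodule.smul_mem
        apply Submodule.subset_span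
        exact ⟨(⟨i, Finset.mem_range.mp hi⟩ : Fin n), by norm_num⟩
      · rw [Submodule.span_le]
        rintro _ ⟨i, rfl⟩
        exact hgen i
    have hlin : LinearIndependent ℂ
        (fun i : Fin n => ξ (k - (((i : ℕ) : Fin n)), (i : ℕ))) := by
      have hinj2 : Function.Injective
          (fun i : Fin n => ((k - (((i : ℕ) : Fin n)), (i : ℕ)) : Fin n × ℕ)) := by
        intro a b hab
        obtain ⟨h3, h4⟩ := Prod.mk.inj hab
        exact Fin.val_injective h4
      exact (horth.comp _ hinj2).linearIndependent
    rw [hspan, finrank_span_eq_card hlin, Fintype.card_fin]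
end
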